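/- arXiv:2309.11391 — 3 statements merged into one kernel-verified Lean document; each statement's English description precedes it below -/
import Mathlib

section
/- Let X be a reflexive Banach space, k = l + m, P a cut of {1,...,k} of size l, and Ū = (U₁,...,U_k) free ultrafilters. Let s and t be normalized trees in X of heights l and m which are Ū_P-weakly null and Ū_{P^c}-weakly null respectively, and let u = s ⊛_P t be their P-intertwining. Then for all (a_i) ∈ ℝ^k: N_u^Ū(Σ_{i∈P} a_i e_i) ≤ N_u^Ū(Σ_{i=1}^k a_i e_i) and N_u^Ū(Σ_{i∈P^c} a_i e_i) ≤ N_u^Ū(Σ_{i=1}^k a_i e_i). -/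
open Filter Topology
open scoped ZeroAtInfty ENNReal NNReal

/-- Increasing `k`-tuples of naturals: the vertices `[ℕ]^k` of the interlacing graph. -/
def IncTuple (k : ℕ) := {f : Fin k → ℕ // StrictMono f}

/-- `m₁ ≤ n₁ ≤ m₂ ≤ n₂ ≤ ⋯ ≤ m_k ≤ n_k`. -/
def InterLE {k : ℕ} (m n : Fin k → ℕ) : Prop :=
  (∀ i, m i ≤ n i) ∧ ∀ (i : ℕ) (h : i + 1 < k), n ⟨i, Nat.lt_of_succ_lt h⟩ ≤ m ⟨i + 1, h⟩

/-- The pair `(m, n)` interlaces. -/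
def Interlacing {k : ℕ} (m n : Fin k → ℕ) : Prop := InterLE m n ∨ InterLE n m

/-- `m₁ ≤ n₁ < m₂ ≤ n₂ < ⋯ < m_k ≤ n_k`. -/
def StrongInterLE {k : ℕ} (m n : Fin k → ℕ) : Prop :=
  (∀ i, m i ≤ n i) ∧ ∀ (i : ℕ) (h : i + 1 < k), n ⟨i, Nat.lt_of_succ_lt h⟩ < m ⟨i + 1, h⟩

/-- The pair `(m, n)` is strongly interlacing. -/
def StronglyInterlacing {k : ℕ} (m n : Fin k → ℕ) : Prop :=
  StrongInterLE m n ∨ StrongInterLE n m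

/-- The interlacing graph on `[ℕ]^k`. -/
def interGraph (k : ℕ) : SimpleGraph (IncTuple k) where
  Adj m n := m ≠ n ∧ Interlacing m.1 n.1
  symm := ⟨fun _ _ h => ⟨h.1.symm, h.2.symm⟩⟩
  loopless := ⟨fun _ h => h.1 rfl⟩

/-- The interlacing graph metric `d_I`. -/
noncomputable def dI {k : ℕ} (m n : IncTuple k) : ℕ := (interGraph k).dist m n

/-- All entries of the tuple belong to `L`. -/
def memAll {k : ℕ} (L : Set ℕ) (m : IncTuple k) : Prop := ∀ i, m.1 i ∈ L

/-- `m̄ < n̄`: every entry of `m` is below every entry of `n`. -/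
def ordLT {k : ℕ} (m n : IncTuple k) : Prop := ∀ i j, m.1 i < n.1 j

/-- Kalton's `Q(ε, δ)`-property of a metric space. -/
def HasQProp (M : Type*) [MetricSpace M] (ε δ : ℝ) : Prop :=
  ∀ (k : ℕ) (f : IncTuple k → M),
    (∀ m n : IncTuple k, dist (f m) (f n) ≤ δ * dI m n) →
    ∃ L : Set ℕ, L.Infinite ∧ ∀ m n : IncTuple k, memAll L m → memAll L n → ordLT m n →
      dist (f m) (f n) < ε

/-- The modulus `Δ_M(ε)`. -/
noncomputable def DeltaMod (M : Type*) [MetricSpace M] (ε : ℝ) : ℝ :=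
  sSup {δ : ℝ | 0 ≤ δ ∧ HasQProp M ε δ}

/-- The constant `q_M`. -/
noncomputable def qMod (M : Type*) [MetricSpace M] : ℝ :=
  sSup {c : ℝ | 0 ≤ c ∧ ∀ ε : ℝ, 0 < ε → c * ε ≤ DeltaMod M ε}

/-- Boundedness of a map into a metric space. -/
def IsBddMap {α : Type*} {M : Type*} [MetricSpace M] (f : α → M) : Prop :=
  ∃ R : ℝ, ∀ x y, dist (f x) (f y) ≤ R

/-- Property `Q` with constant `C`: every Lipschitz map on an interlacing graph
concentrates on `[L]^k` up to `C·Lip(f)`. -/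
def HasPropQConst (M : Type*) [MetricSpace M] (C : ℝ) : Prop :=
  ∀ (k : ℕ) (f : IncTuple k → M) (K : ℝ), 0 ≤ K →
    (∀ m n : IncTuple k, dist (f m) (f n) ≤ K * dI m n) →
    ∃ L : Set ℕ, L.Infinite ∧ ∀ m n : IncTuple k, memAll L m → memAll L n →
      dist (f m) (f n) ≤ C * K

/-- Property `Q`. -/
def HasPropQ (M : Type*) [MetricSpace M] : Prop := ∃ C : ℝ, 0 ≤ C ∧ HasPropQConst M C

/-- The property `Q` constant `Q_M`. -/
noncomputable def QConst (M : Type*) [MetricSpace M] : ℝ :=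
  sInf {C : ℝ | 0 ≤ C ∧ HasPropQConst M C}

theorem compl_card {l m : ℕ} (P : Finset (Fin (l + m))) (hP : P.card = l) : Pᶜ.card = m := by
  rw [Finset.card_compl, hP, Fintype.card_fin]; omega

/-- The increasing subtuple `(n_i : i ∈ P)`. -/
def subTuple {k j : ℕ} (n : Fin k → ℕ) (P : Finset (Fin k)) (h : P.card = j) :
    Fin j → ℕ := fun i => n (P.orderEmbOfFin h i)

/-- The set of distances `d_M(f(n_i : i ∈ P), g(n_i : i ∈ P^c))` over `n̄ ∈ [L]^{l+m}`. -/
def cutDistSet {l m : ℕ} {M : Type*} [MetricSpace M]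
    (f : (Fin l → ℕ) → M) (g : (Fin m → ℕ) → M) (L : Set ℕ)
    (P : Finset (Fin (l + m))) (hP : P.card = l) : Set ℝ :=
  {d : ℝ | ∃ n : Fin (l + m) → ℕ, StrictMono n ∧ (∀ i, n i ∈ L) ∧
    d = dist (f (subTuple n P hP)) (g (subTuple n Pᶜ (compl_card P hP)))}

/-- `C`-cut stability. -/
def CutStableWith (M : Type*) [MetricSpace M] (C : ℝ) : Prop :=
  ∀ (l m : ℕ) (f : (Fin l → ℕ) → M) (g : (Fin m → ℕ) → M),
    IsBddMap f → IsBddMap g → ∀ L : Set ℕ, L.Infinite →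
    ∀ (P Q : Finset (Fin (l + m))) (hP : P.card = l) (hQ : Q.card = l),
      sInf (cutDistSet f g L P hP) ≤ C * sSup (cutDistSet f g L Q hQ)

/-- A permutation of `{1,…,l+m}` preserving the order on `{1,…,l}` and on `{l+1,…,l+m}`. -/
def OrderPreservingPerm {l m : ℕ} (π : Equiv.Perm (Fin (l + m))) : Prop :=
  StrictMono (fun i : Fin l => π (Fin.castAdd m i)) ∧
  StrictMono (fun j : Fin m => π (Fin.natAdd l j))

/-- Distances `d_M(f(n_{π(1)},…,n_{π(l)}), g(n_{π(l+1)},…,n_{π(l+m)}))` over `n̄ ∈ [L]^{l+m}`. -/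
def permDistSet {l m : ℕ} {M : Type*} [MetricSpace M]
    (f : (Fin l → ℕ) → M) (g : (Fin m → ℕ) → M) (L : Set ℕ)
    (π : Equiv.Perm (Fin (l + m))) : Set ℝ :=
  {d : ℝ | ∃ n : Fin (l + m) → ℕ, StrictMono n ∧ (∀ i, n i ∈ L) ∧
    d = dist (f (fun i => n (π (Fin.castAdd m i)))) (g (fun j => n (π (Fin.natAdd l j))))}

/-- `C`-upper stability. -/
def UpperStableWith (M : Type*) [MetricSpace M] (C : ℝ) : Prop :=
  ∀ (l m : ℕ) (f : (Fin l → ℕ) → M) (g : (Fin m → ℕ) → M),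
    IsBddMap f → IsBddMap g → ∀ L : Set ℕ, L.Infinite →
    ∀ π : Equiv.Perm (Fin (l + m)), OrderPreservingPerm π →
      sInf (permDistSet f g L (Equiv.refl _)) ≤ C * sSup (permDistSet f g L π)

/-- The modulus of continuity `ω_h`. -/
noncomputable def omegaMod {M N : Type*} [MetricSpace M] [MetricSpace N] (h : M → N)
    (t : ℝ) : ℝ≥0∞ :=
  ⨆ p : {p : M × M // dist p.1 p.2 ≤ t}, edist (h p.1.1) (h p.1.2)

/-- The compression modulus `ρ_h`. -/
noncomputable def rhoMod {M N : Type*} [MetricSpace M] [MetricSpace N] (h : M → N)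
    (t : ℝ) : ℝ≥0∞ :=
  ⨅ p : {p : M × M // t ≤ dist p.1 p.2}, edist (h p.1.1) (h p.1.2)

/-- A coarse embedding, expressed via the moduli. -/
def CoarseEmbMod {M N : Type*} [MetricSpace M] [MetricSpace N] (h : M → N) : Prop :=
  (∀ t : ℝ, omegaMod h t < ⊤) ∧ Tendsto (rhoMod h) atTop (𝓝 ⊤)

/-- A uniform embedding, expressed via the moduli. -/
def UniformEmbMod {M N : Type*} [MetricSpace M] [MetricSpace N] (h : M → N) : Prop :=
  Tendsto (omegaMod h) (𝓝[>] (0 : ℝ)) (𝓝 0) ∧ ∀ t : ℝ, 0 < t → 0 < rhoMod h t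

/-- A free ultrafilter on `ℕ`. -/
def FreeUF (U : Ultrafilter ℕ) : Prop := (U : Filter ℕ) ≤ Filter.cofinite

/-- The iterated ultrafilter limit `lim_{n₁,U₁} ⋯ lim_{n_k,U_k} F(n₁,…,n_k)`. -/
noncomputable def ultraLim : (k : ℕ) → (Fin k → Ultrafilter ℕ) → ((Fin k → ℕ) → ℝ) → ℝ
  | 0, _, F => F (fun i => i.elim0)
  | k + 1, U, F => ultraLim k (fun i => U i.castSucc)
      (fun n => limUnder (U (Fin.last k)) (fun j => F (Fin.snoc n j)))

/-- An unrooted (countably branching) tree of height `k` in `X`. -/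
def TreeU (X : Type*) (k : ℕ) := (i : Fin k) → (Fin (i.1 + 1) → ℕ) → X

/-- A rooted (countably branching) tree of height `k` in `X`. -/
def TreeR (X : Type*) (k : ℕ) := (i : Fin (k + 1)) → (Fin i.1 → ℕ) → X

/-- A normalized unrooted tree takes values in the unit sphere. -/
def NormalizedU {X : Type*} [NormedAddCommGroup X] {k : ℕ} (t : TreeU X k) : Prop :=
  ∀ i v, ‖t i v‖ = 1

/-- A normalized rooted tree takes values in the unit sphere. -/
def NormalizedR {X : Type*} [NormedAddCommGroup X] {k : ℕ} (t : TreeR X k) : Prop :=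
  ∀ i v, ‖t i v‖ = 1

/-- `∀_{U₁} n₁ ⋯ ∀_{U_j} n_j, P(n₁,…,n_j)`. -/
def iterEventually : (j : ℕ) → (Fin j → Ultrafilter ℕ) → ((Fin j → ℕ) → Prop) → Prop
  | 0, _, P => P (fun i => i.elim0)
  | j + 1, U, P => iterEventually j (fun i => U i.castSucc)
      (fun n => ∀ᶠ a in U (Fin.last j), P (Fin.snoc n a))

/-- An unrooted tree is `Ū`-weakly null. -/
def WeaklyNullU {X : Type*} [NormedAddCommGroup X] [NormedSpace ℝ X] {k : ℕ}
    (U : Fin k → Ultrafilter ℕ) (t : TreeU X k) : Prop :=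
  ∀ i : Fin k, iterEventually i.1 (fun j => U (Fin.castLE i.isLt.le j))
    (fun pre => ∀ φ : X →L[ℝ] ℝ,
      Tendsto (fun a : ℕ => φ (t i (Fin.snoc pre a))) (U i) (𝓝 0))

/-- A rooted tree is `Ū`-weakly null. -/
def WeaklyNullR {X : Type*} [NormedAddCommGroup X] [NormedSpace ℝ X] {k : ℕ}
    (U : Fin k → Ultrafilter ℕ) (t : TreeR X k) : Prop :=
  ∀ i : Fin k, iterEventually i.1 (fun j => U (Fin.castLE i.isLt.le j))
    (fun pre => ∀ φ : X →L[ℝ] ℝ,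
      Tendsto (fun a : ℕ => φ (t i.succ (Fin.snoc pre a))) (U i) (𝓝 0))

/-- The norm `N_t^{Ū}(x ⊕ Σ aᵢ eᵢ)`. -/
noncomputable def treeNorm {X : Type*} [NormedAddCommGroup X] [NormedSpace ℝ X] {k : ℕ}
    (U : Fin k → Ultrafilter ℕ) (t : TreeU X k) (x : X) (a : Fin k → ℝ) : ℝ :=
  ultraLim k U (fun n => ‖x + ∑ i : Fin k, a i • t i (fun j => n (Fin.castLE i.isLt j))‖)

/-- The number of elements of `P` that are `≤ j`. -/
def rankIn {k : ℕ} (P : Finset (Fin k)) (j : Fin k) : ℕ :=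
  (P.filter (fun i => i ≤ j)).card

/-- The `P`-intertwining `s ⊛_P t` of two trees. -/
def intertwine {X : Type*} {l m : ℕ} (P : Finset (Fin (l + m))) (hP : P.card = l)
    (s : TreeU X l) (t : TreeU X m) : TreeU X (l + m) := fun j v =>
  let v' : Fin (l + m) → ℕ := fun p => if h : p.1 < j.1 + 1 then v ⟨p.1, h⟩ else 0
  if hj : j ∈ P then
    s ⟨rankIn P j - 1, by
        have h1 : 0 < rankIn P j :=
          Finset.card_pos.mpr ⟨j, Finset.mem_filter.mpr ⟨hj, le_refl j⟩⟩
        have h2 : rankIn P j ≤ l := (Finset.card_filter_le P _).trans hP.le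
        omega⟩
      (fun b => v' (P.orderEmbOfFin hP ⟨b.1, by
        have h1 : 0 < rankIn P j :=
          Finset.card_pos.mpr ⟨j, Finset.mem_filter.mpr ⟨hj, le_refl j⟩⟩
        have h2 : rankIn P j ≤ l := (Finset.card_filter_le P _).trans hP.le
        have h3 := b.isLt
        omega⟩))
  else
    t ⟨rankIn Pᶜ j - 1, by
        have h1 : 0 < rankIn Pᶜ j :=
          Finset.card_pos.mpr ⟨j, Finset.mem_filter.mpr ⟨Finset.mem_compl.mpr hj, le_refl j⟩⟩
        have h2 : rankIn Pᶜ j ≤ m := (Finset.card_filter_le Pᶜ _).trans (compl_card P hP).le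
        omega⟩
      (fun b => v' (Pᶜ.orderEmbOfFin (compl_card P hP) ⟨b.1, by
        have h1 : 0 < rankIn Pᶜ j :=
          Finset.card_pos.mpr ⟨j, Finset.mem_filter.mpr ⟨Finset.mem_compl.mpr hj, le_refl j⟩⟩
        have h2 : rankIn Pᶜ j ≤ m := (Finset.card_filter_le Pᶜ _).trans (compl_card P hP).le
        have h3 := b.isLt
        omega⟩))

/-- The unrooted part of a rooted tree. -/
def unroot {X : Type*} {k : ℕ} (t : TreeR X k) : TreeU X k := fun i v => t i.succ v

/-- The summing basis of `c₀`. -/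
noncomputable def summingBasis (n : ℕ) : C₀(ℕ, ℝ) :=
  ⟨⟨fun x => if x ≤ n then 1 else 0, continuous_of_discreteTopology⟩, by
    rw [cocompact_eq_cofinite, Nat.cofinite_eq_atTop]
    refine (tendsto_congr' ?_).mpr tendsto_const_nhds
    filter_upwards [eventually_gt_atTop n] with x hx
    simp [if_neg (not_le.mpr hx)]⟩

/-- The canonical map `[ℕ]^k → c₀`, `n̄ ↦ Σᵢ s_{nᵢ}`. -/
noncomputable def interMap {k : ℕ} (m : Fin k → ℕ) : C₀(ℕ, ℝ) :=
  ∑ i : Fin k, summingBasis (m i)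

/-- Krivine–Maurey stability of a metric space. -/
def StableSpace (M : Type*) [MetricSpace M] : Prop :=
  ∀ U V : Ultrafilter ℕ, FreeUF U → FreeUF V →
    ∀ x y : ℕ → M, Bornology.IsBounded (Set.range x) → Bornology.IsBounded (Set.range y) →
      limUnder (U : Filter ℕ) (fun a => limUnder (V : Filter ℕ) (fun b => dist (x a) (y b)))
        = limUnder (V : Filter ℕ) (fun b => limUnder (U : Filter ℕ) (fun a => dist (x a) (y b)))

/-!
Both inequalities come from one fact: a coefficient `a_q` can be set to zero without increasing
`N_u^Ū` if level `q` of `u` is weakly null and no later level with a nonzero coefficient depends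
on the `q`-th coordinate. Peeling off the first `q - 1` limits reduces this to `q = 1`. There the
inner limits define a convex, 1-Lipschitz function `N` of the vector chosen at the first level;
the left-hand side is `N(0)` and the right-hand side is `lim_{n,U₁} N(a₁ u(n))`, which is at least
`N(0)` by Mazur's theorem because `u(n)` is weakly null. In `s ⊛_P t` a level in `P` depends only
on the coordinates in `P`, and a level in `P^c` only on those in `P^c`, so the coefficients
outside `P` (or inside `P`) can be dropped one at a time, starting from the last one.
-/

section LimUnder

variable {U : Ultrafilter ℕ} {f g : ℕ → ℝ} {R R' : ℝ}

lemma tendsto_limUnder_of_abs_le (h : ∀ n, |f n| ≤ R) :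
    Tendsto f (U : Filter ℕ) (𝓝 (limUnder (U : Filter ℕ) f)) := by
  obtain ⟨a, -, ha⟩ := (isCompact_Icc (a := -R) (b := R)).ultrafilter_le_nhds (U.map f) (by
    rw [Ultrafilter.coe_map, le_principal_iff, mem_map]
    exact univ_mem' fun n => abs_le.1 (h n))
  exact tendsto_nhds_limUnder ⟨a, ha⟩

lemma abs_limUnder_le (h : ∀ n, |f n| ≤ R) : |limUnder (U : Filter ℕ) f| ≤ R := by
  have hf := tendsto_limUnder_of_abs_le (U := U) h
  exact abs_le.2 ⟨ge_of_tendsto' hf fun n => (abs_le.1 (h n)).1,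
    le_of_tendsto' hf fun n => (abs_le.1 (h n)).2⟩

lemma limUnder_le_limUnder (hf : ∀ n, |f n| ≤ R) (hg : ∀ n, |g n| ≤ R')
    (h : ∀ᶠ n in (U : Filter ℕ), f n ≤ g n) :
    limUnder (U : Filter ℕ) f ≤ limUnder (U : Filter ℕ) g :=
  le_of_tendsto_of_tendsto (tendsto_limUnder_of_abs_le hf) (tendsto_limUnder_of_abs_le hg) h

lemma limUnder_mul_add_mul (hf : ∀ n, |f n| ≤ R) (hg : ∀ n, |g n| ≤ R') (a b : ℝ) :
    limUnder (U : Filter ℕ) (fun n => a * f n + b * g n)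
      = a * limUnder (U : Filter ℕ) f + b * limUnder (U : Filter ℕ) g :=
  (((tendsto_limUnder_of_abs_le hf).const_mul a).add
    ((tendsto_limUnder_of_abs_le hg).const_mul b)).limUnder_eq

lemma limUnder_const (c : ℝ) : limUnder (U : Filter ℕ) (fun _ : ℕ => c) = c :=
  tendsto_const_nhds.limUnder_eq

end LimUnder

section UltraLim

variable {R R' : ℝ}

lemma abs_ultraLim_le : ∀ {k : ℕ} {U : Fin k → Ultrafilter ℕ} {F : (Fin k → ℕ) → ℝ},
    (∀ n, |F n| ≤ R) → |ultraLim k U F| ≤ R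
  | 0, _, _, h => h _
  | _ + 1, _, _, h => by rw [ultraLim]; exact abs_ultraLim_le fun _ => abs_limUnder_le fun _ => h _

lemma ultraLim_mono : ∀ {k : ℕ} {U : Fin k → Ultrafilter ℕ} {F G : (Fin k → ℕ) → ℝ},
    (∀ n, |F n| ≤ R) → (∀ n, |G n| ≤ R') → (∀ n, F n ≤ G n) → ultraLim k U F ≤ ultraLim k U G
  | 0, _, _, _, _, _, h => h _
  | _ + 1, _, _, _, hF, hG, h => by
    rw [ultraLim, ultraLim]
    exact ultraLim_mono (fun _ => abs_limUnder_le fun _ => hF _)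
      (fun _ => abs_limUnder_le fun _ => hG _)
      fun _ => limUnder_le_limUnder (fun _ => hF _) (fun _ => hG _) (.of_forall fun _ => h _)

lemma ultraLim_const : ∀ {k : ℕ} {U : Fin k → Ultrafilter ℕ} (c : ℝ),
    ultraLim k U (fun _ => c) = c
  | 0, _, _ => rfl
  | _ + 1, _, c => by simp only [ultraLim, limUnder_const, ultraLim_const]

lemma ultraLim_mul_add_mul : ∀ {k : ℕ} {U : Fin k → Ultrafilter ℕ} {F G : (Fin k → ℕ) → ℝ},
    (∀ n, |F n| ≤ R) → (∀ n, |G n| ≤ R') → ∀ a b : ℝ,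
    ultraLim k U (fun n => a * F n + b * G n) = a * ultraLim k U F + b * ultraLim k U G
  | 0, _, _, _, _, _, _, _ => rfl
  | _ + 1, _, _, _, hF, hG, a, b => by
    simp only [ultraLim, limUnder_mul_add_mul (fun _ => hF _) (fun _ => hG _)]
    exact ultraLim_mul_add_mul (fun _ => abs_limUnder_le fun _ => hF _)
      (fun _ => abs_limUnder_le fun _ => hG _) a b

lemma ultraLim_add_const {k : ℕ} {U : Fin k → Ultrafilter ℕ} {F : (Fin k → ℕ) → ℝ}
    (hF : ∀ n, |F n| ≤ R) (c : ℝ) : ultraLim k U (fun n => F n + c) = ultraLim k U F + c := by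
  have h := ultraLim_mul_add_mul (U := U) hF (fun _ => (le_refl |c|)) 1 1
  simpa only [one_mul, ultraLim_const] using h

lemma ultraLim_succ : ∀ {k : ℕ} (U : Fin (k + 1) → Ultrafilter ℕ) (F : (Fin (k + 1) → ℕ) → ℝ),
    ultraLim (k + 1) U F = limUnder (U 0 : Filter ℕ)
      (fun a => ultraLim k (fun i => U i.succ) (fun n => F (Fin.cons a n)))
  | 0, U, F => by
    have h : ∀ a : ℕ, (Fin.snoc (fun i => i.elim0) a : Fin 1 → ℕ) = Fin.cons a Fin.elim0 :=
      fun a => funext fun i => by fin_cases i; rfl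
    simp only [ultraLim, h]
    rfl
  | k + 1, U, F => by
    rw [ultraLim, ultraLim_succ]
    congr 1
    funext a
    simp only [ultraLim, ← Fin.cons_snoc_eq_snoc_cons, Fin.succ_castSucc, Fin.succ_last]

end UltraLim

lemma iterEventually.mono : ∀ {k : ℕ} {U : Fin k → Ultrafilter ℕ} {p q : (Fin k → ℕ) → Prop},
    iterEventually k U p → (∀ n, p n → q n) → iterEventually k U q
  | 0, _, _, _, hp, h => h _ hp
  | _ + 1, _, _, _, hp, h => by
    rw [iterEventually] at hp ⊢
    exact hp.mono fun _ hn => hn.mono fun _ => h _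

lemma iterEventually_succ : ∀ {k : ℕ} (U : Fin (k + 1) → Ultrafilter ℕ)
    (p : (Fin (k + 1) → ℕ) → Prop), iterEventually (k + 1) U p ↔
      ∀ᶠ a in (U 0 : Filter ℕ), iterEventually k (fun i => U i.succ) (fun n => p (Fin.cons a n))
  | 0, U, p => by
    have h : ∀ a : ℕ, (Fin.snoc (fun i => i.elim0) a : Fin 1 → ℕ) = Fin.cons a Fin.elim0 :=
      fun a => funext fun i => by fin_cases i; rfl
    simp only [iterEventually, h]
    rfl
  | k + 1, U, p => by
    rw [iterEventually, iterEventually_succ]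
    refine eventually_congr (.of_forall fun a => ?_)
    simp only [iterEventually, ← Fin.cons_snoc_eq_snoc_cons, Fin.succ_castSucc, Fin.succ_last]

lemma iterEventually_comp_strictMono : ∀ {q r : ℕ} {e : Fin r → Fin q}, StrictMono e →
    ∀ {U : Fin q → Ultrafilter ℕ} {p : (Fin r → ℕ) → Prop},
    iterEventually r (fun i => U (e i)) p → iterEventually q U (fun n => p (fun i => n (e i)))
  | 0, 0, _, _, _, _, h => by
    simpa only [iterEventually, Subsingleton.elim (fun i : Fin 0 => _) Fin.elim0] using h
  | 0, _ + 1, e, _, _, _, _ => (e 0).elim0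
  | q + 1, r, e, he, U, p, h => by
    rw [iterEventually]
    by_cases hlast : ∃ i, e i = Fin.last q
    · obtain ⟨r, rfl⟩ : ∃ r', r = r' + 1 := Nat.exists_eq_succ_of_ne_zero
        (by rintro rfl; exact hlast.elim fun i _ => i.elim0)
      have he_last : e (Fin.last r) = Fin.last q := by
        obtain ⟨i, hi⟩ := hlast
        exact le_antisymm (Fin.le_last _) (hi ▸ he.monotone (Fin.le_last i))
      have hne : ∀ i : Fin r, e i.castSucc ≠ Fin.last q := fun i h =>
        (he (Fin.castSucc_lt_last i)).ne (h.trans he_last.symm)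
      set e' : Fin r → Fin q := fun i => (e i.castSucc).castPred (hne i)
      have he' : StrictMono e' := fun i j hij => by
        simpa [e', Fin.castPred_lt_castPred_iff] using he (Fin.castSucc_lt_castSucc_iff.2 hij)
      rw [iterEventually] at h
      refine (iterEventually_comp_strictMono he' (U := fun i => U i.castSucc)
        (p := fun m => ∀ᶠ a in (U (Fin.last q) : Filter ℕ), p (Fin.snoc m a)) ?_).mono
        fun n hn => hn.mono fun a ha => ?_
      · simpa only [e', Fin.castSucc_castPred, he_last] using h
      · convert ha using 2 with i
        refine Fin.lastCases ?_ (fun i => ?_) i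
        · simp [he_last]
        · rw [Fin.snoc_castSucc, ← Fin.castSucc_castPred (e i.castSucc) (hne i), Fin.snoc_castSucc]
    · simp only [not_exists] at hlast
      set e' : Fin r → Fin q := fun i => (e i).castPred (hlast i)
      have he' : StrictMono e' := fun i j hij => by
        simpa [e', Fin.castPred_lt_castPred_iff] using he hij
      refine (iterEventually_comp_strictMono he' (U := fun i => U i.castSucc) (p := p) ?_).mono
        fun n hn => .of_forall fun a => ?_
      · simpa only [e', Fin.castSucc_castPred] using h
      · convert hn using 2 with i
        rw [← Fin.castSucc_castPred (e i) (hlast i), Fin.snoc_castSucc]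

section Mazur

variable {X : Type*} [NormedAddCommGroup X] [NormedSpace ℝ X]

/-- Mazur's theorem. -/
lemma Convex.mem_of_weak_tendsto {ι : Type*} {l : Filter ι} [l.NeBot] {C : Set X}
    (hC : Convex ℝ C) (hCc : IsClosed C) {z : ι → X} {y : X}
    (hz : ∀ φ : X →L[ℝ] ℝ, Tendsto (fun n => φ (z n)) l (𝓝 (φ y)))
    (hzC : ∀ᶠ n in l, z n ∈ C) : y ∈ C := by
  by_contra hy
  obtain ⟨φ, u, hφC, huy⟩ := geometric_hahn_banach_closed_point hC hCc hy
  obtain ⟨n, hnC, hn⟩ := (hzC.and ((hz φ).eventually_const_lt huy)).exists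
  exact (hφC _ hnC).not_gt hn

lemma ConvexOn.le_limUnder_of_weak_tendsto {Ψ : X → ℝ} (hΨ : ConvexOn ℝ Set.univ Ψ)
    (hΨc : LowerSemicontinuous Ψ) {U : Ultrafilter ℕ} {z : ℕ → X} {y : X}
    (hz : ∀ φ : X →L[ℝ] ℝ, Tendsto (fun n => φ (z n)) (U : Filter ℕ) (𝓝 (φ y)))
    {R : ℝ} (hR : ∀ n, |Ψ (z n)| ≤ R) : Ψ y ≤ limUnder (U : Filter ℕ) (fun n => Ψ (z n)) := by
  refine le_of_forall_pos_le_add fun ε hε => ?_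
  refine Convex.mem_of_weak_tendsto (C := {x | Ψ x ≤ _}) ?_ (hΨc.isClosed_preimage _) hz
    ((tendsto_limUnder_of_abs_le hR).eventually (ge_mem_nhds (lt_add_of_pos_right _ hε)))
  simpa only [Set.mem_univ, true_and] using
    hΨ.convex_le (limUnder (U : Filter ℕ) (fun n => Ψ (z n)) + ε)

end Mazur

lemma abs_norm_add_le {X : Type*} [NormedAddCommGroup X] {ι : Type*} {w : ι → X} {R : ℝ}
    (hw : ∀ n, ‖w n‖ ≤ R) (x : X) (n : ι) : |‖x + w n‖| ≤ ‖x‖ + R :=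
  (abs_norm _).trans_le ((norm_add_le _ _).trans (add_le_add le_rfl (hw n)))

section UltraNorm

variable {X : Type*} [NormedAddCommGroup X] {k : ℕ} {V : Fin k → Ultrafilter ℕ}
  {w : (Fin k → ℕ) → X} {R : ℝ}

lemma ultraLim_norm_add_le (hw : ∀ n, ‖w n‖ ≤ R) (x y : X) :
    ultraLim k V (fun n => ‖x + w n‖) ≤ ultraLim k V (fun n => ‖y + w n‖) + ‖x - y‖ := by
  rw [← ultraLim_add_const (abs_norm_add_le hw y)]
  refine ultraLim_mono (abs_norm_add_le hw x) (R' := ‖y‖ + R + ‖x - y‖)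
    (fun n => ?_) (fun n => ?_)
  · rw [abs_of_nonneg (by positivity)]
    exact add_le_add ((abs_norm_add_le hw y n).trans' (le_abs_self _)) le_rfl
  · calc ‖x + w n‖ = ‖(y + w n) + (x - y)‖ := by abel_nf
      _ ≤ ‖y + w n‖ + ‖x - y‖ := norm_add_le _ _

lemma convexOn_ultraLim_norm_add [NormedSpace ℝ X] (hw : ∀ n, ‖w n‖ ≤ R) :
    ConvexOn ℝ Set.univ (fun x => ultraLim k V (fun n => ‖x + w n‖)) := by
  refine ⟨convex_univ, fun x _ y _ θ₁ θ₂ h₁ h₂ hθ => ?_⟩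
  have hpt : ∀ n, ‖(θ₁ • x + θ₂ • y) + w n‖ ≤ θ₁ * ‖x + w n‖ + θ₂ * ‖y + w n‖ := fun n =>
    calc ‖(θ₁ • x + θ₂ • y) + w n‖ = ‖θ₁ • (x + w n) + θ₂ • (y + w n)‖ := by
          rw [smul_add, smul_add, add_add_add_comm, ← add_smul, hθ, one_smul]
      _ ≤ θ₁ * ‖x + w n‖ + θ₂ * ‖y + w n‖ := by
          refine (norm_add_le _ _).trans_eq ?_
          rw [norm_smul, norm_smul, Real.norm_of_nonneg h₁, Real.norm_of_nonneg h₂]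
  simp only [smul_eq_mul]
  rw [← ultraLim_mul_add_mul (abs_norm_add_le hw x) (abs_norm_add_le hw y)]
  refine ultraLim_mono (abs_norm_add_le hw _) (R' := θ₁ * (‖x‖ + R) + θ₂ * (‖y‖ + R))
    (fun n => ?_) hpt
  rw [abs_of_nonneg (by positivity)]
  gcongr <;> exact (le_abs_self _).trans (abs_norm_add_le hw _ n)

end UltraNorm

section TreeNorm

variable {X : Type*} [NormedAddCommGroup X] [NormedSpace ℝ X] {k : ℕ} {B : ℝ}

lemma norm_sum_smul_le {f : Fin k → X} (hf : ∀ i, ‖f i‖ ≤ B) (a : Fin k → ℝ) :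
    ‖∑ i, a i • f i‖ ≤ B * ∑ i, |a i| := by
  rw [Finset.mul_sum]
  refine (norm_sum_le _ _).trans (Finset.sum_le_sum fun i _ => ?_)
  rw [norm_smul, Real.norm_eq_abs, mul_comm]
  exact mul_le_mul_of_nonneg_right (hf i) (abs_nonneg _)

variable {U : Fin k → Ultrafilter ℕ} {u : TreeU X k}

lemma abs_treeNorm_le (hb : ∀ i v, ‖u i v‖ ≤ B) (x : X) (a : Fin k → ℝ) :
    |treeNorm U u x a| ≤ ‖x‖ + B * ∑ i, |a i| :=
  abs_ultraLim_le (abs_norm_add_le (fun _ => norm_sum_smul_le (fun _ => hb _ _) a) x)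

lemma lipschitzWith_treeNorm (hb : ∀ i v, ‖u i v‖ ≤ B) (a : Fin k → ℝ) :
    LipschitzWith 1 (fun x => treeNorm U u x a) :=
  .of_le_add fun x y => by
    rw [dist_eq_norm]
    exact ultraLim_norm_add_le (fun _ => norm_sum_smul_le (fun _ => hb _ _) a) x y

lemma convexOn_treeNorm (hb : ∀ i v, ‖u i v‖ ≤ B) (a : Fin k → ℝ) :
    ConvexOn ℝ Set.univ (fun x => treeNorm U u x a) :=
  convexOn_ultraLim_norm_add (fun _ => norm_sum_smul_le (fun _ => hb _ _) a)

lemma treeNorm_congr {u' : TreeU X k} {a : Fin k → ℝ} (h : ∀ i, a i ≠ 0 → u i = u' i)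
    (x : X) : treeNorm U u x a = treeNorm U u' x a := by
  unfold treeNorm
  congr! 4 with n
  refine Finset.sum_congr rfl fun i _ => ?_
  by_cases hi : a i = 0
  · simp [hi]
  · rw [h i hi]

end TreeNorm

namespace TreeU

variable {X : Type*} {k : ℕ}

def branch (u : TreeU X (k + 1)) (a : ℕ) : TreeU X k := fun i v => u i.succ (Fin.cons a v)

def IgnoresCoord (u : TreeU X k) (j : Fin k) (q : ℕ) : Prop :=
  ∀ v w : Fin (j.1 + 1) → ℕ, (∀ b : Fin (j.1 + 1), b.1 ≠ q → v b = w b) → u j v = u j w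

lemma IgnoresCoord.branch {u : TreeU X (k + 1)} {j : Fin k} {q : ℕ}
    (h : u.IgnoresCoord j.succ (q + 1)) (a : ℕ) : (u.branch a).IgnoresCoord j q :=
  fun v w hvw => h _ _ fun b hb => by
    cases b using Fin.cases with
    | zero => rfl
    | succ b => exact hvw b fun hbq => hb (by simp [hbq])

lemma branch_eq_branch {u : TreeU X (k + 1)} {j : Fin k} (h : u.IgnoresCoord j.succ 0)
    (a a' : ℕ) : u.branch a j = u.branch a' j :=
  funext fun v => h _ _ fun b hb => by
    cases b using Fin.cases with
    | zero => exact absurd rfl hb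
    | succ b => rfl

variable [NormedAddCommGroup X] [NormedSpace ℝ X]

/-- `WeaklyNullU U u` unfolds to `∀ q, u.WeaklyNullAt U q`. -/
def WeaklyNullAt (U : Fin k → Ultrafilter ℕ) (u : TreeU X k) (q : Fin k) : Prop :=
  iterEventually q.1 (fun j => U (Fin.castLE q.isLt.le j))
    (fun pre => ∀ φ : X →L[ℝ] ℝ, Tendsto (fun a => φ (u q (Fin.snoc pre a))) (U q) (𝓝 0))

lemma WeaklyNullAt.tendsto_zero {U : Fin (k + 1) → Ultrafilter ℕ} {u : TreeU X (k + 1)}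
    (h : u.WeaklyNullAt U 0) (φ : X →L[ℝ] ℝ) :
    Tendsto (fun a => φ (u 0 (fun _ => a))) (U 0 : Filter ℕ) (𝓝 0) := by
  refine (h φ).congr fun a => congrArg (fun v => φ (u 0 v)) (funext fun i => ?_)
  fin_cases i
  rfl

lemma WeaklyNullAt.branch {U : Fin (k + 1) → Ultrafilter ℕ} {u : TreeU X (k + 1)} {p : Fin k}
    (h : u.WeaklyNullAt U p.succ) :
    ∀ᶠ a in (U 0 : Filter ℕ), (u.branch a).WeaklyNullAt (fun i => U i.succ) p := by
  refine ((iterEventually_succ (k := p.1) _ _).1 h).mono fun a ha => ha.mono fun pre hpre φ => ?_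
  simpa only [TreeU.branch, Fin.cons_snoc_eq_snoc_cons] using hpre φ

end TreeU

section Drop

variable {X : Type*} [NormedAddCommGroup X] [NormedSpace ℝ X] {k : ℕ} {B : ℝ}

lemma treeNorm_succ (U : Fin (k + 1) → Ultrafilter ℕ) (u : TreeU X (k + 1)) (x : X)
    (a : Fin (k + 1) → ℝ) :
    treeNorm U u x a = limUnder (U 0 : Filter ℕ) (fun a₀ => treeNorm (fun i => U i.succ)
      (u.branch a₀) (x + a 0 • u 0 (fun _ => a₀)) (fun i => a i.succ)) := by
  unfold treeNorm
  rw [ultraLim_succ]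
  congr! 4 with a₀ n
  rw [Fin.sum_univ_succ, ← add_assoc]
  have h0 : u 0 (fun j => (Fin.cons a₀ n : Fin (k + 1) → ℕ) (Fin.castLE (Fin.is_lt 0) j))
      = u 0 (fun _ => a₀) := by
    congr 1
    funext j
    fin_cases j
    rfl
  rw [h0]
  congr 2
  refine Finset.sum_congr rfl fun i _ => congrArg (fun v => a i.succ • u i.succ v) ?_
  funext j
  cases j using Fin.cases <;> rfl

lemma abs_treeNorm_branch_le {U : Fin (k + 1) → Ultrafilter ℕ} {u : TreeU X (k + 1)}
    (hb : ∀ i v, ‖u i v‖ ≤ B) (x : X) (a : Fin (k + 1) → ℝ) (a₀ : ℕ) :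
    |treeNorm (fun i => U i.succ) (u.branch a₀) (x + a 0 • u 0 (fun _ => a₀))
      (fun i => a i.succ)| ≤ ‖x‖ + B * ∑ i, |a i| := by
  refine (abs_treeNorm_le (fun i v => hb i.succ _) _ _).trans ?_
  rw [Fin.sum_univ_succ, mul_add, ← add_assoc]
  gcongr
  refine (norm_add_le _ _).trans (add_le_add le_rfl ?_)
  rw [norm_smul, Real.norm_eq_abs, mul_comm]
  exact mul_le_mul_of_nonneg_right (hb 0 _) (abs_nonneg _)

lemma treeNorm_update_first_le {U : Fin (k + 1) → Ultrafilter ℕ} {u : TreeU X (k + 1)}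
    (hb : ∀ i v, ‖u i v‖ ≤ B) (hw : u.WeaklyNullAt U 0) {a : Fin (k + 1) → ℝ}
    (hind : ∀ j : Fin k, a j.succ ≠ 0 → u.IgnoresCoord j.succ 0) (x : X) :
    treeNorm U u x (Function.update a 0 0) ≤ treeNorm U u x a := by
  -- the branches agree on every level carrying a coefficient, so one convex `N` serves them all
  set N : X → ℝ := fun y => treeNorm (fun i => U i.succ) (u.branch 0) y (fun i => a i.succ)
  have hbranch : ∀ a₀ y, treeNorm (fun i => U i.succ) (u.branch a₀) y (fun i => a i.succ) = N y :=
    fun a₀ y => treeNorm_congr (fun j hj => TreeU.branch_eq_branch (hind j hj) a₀ 0) y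
  have hlhs : treeNorm U u x (Function.update a 0 0) = N x := by
    rw [treeNorm_succ]
    simp only [Function.update_self, zero_smul, add_zero,
      Function.update_of_ne (Fin.succ_ne_zero _), hbranch, limUnder_const]
  have hrhs : treeNorm U u x a
      = limUnder (U 0 : Filter ℕ) (fun a₀ => N (x + a 0 • u 0 (fun _ => a₀))) := by
    rw [treeNorm_succ]
    simp only [hbranch]
  have hb' : ∀ i v, ‖u.branch 0 i v‖ ≤ B := fun i v => hb i.succ _
  rw [hlhs, hrhs]
  refine (convexOn_treeNorm hb' _).le_limUnder_of_weak_tendsto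
    (lipschitzWith_treeNorm hb' _).continuous.lowerSemicontinuous (fun φ => ?_)
    (R := ‖x‖ + B * ∑ i, |a i|) (fun a₀ => ?_)
  · simpa using ((hw.tendsto_zero φ).const_mul (a 0)).const_add (φ x)
  · have h := abs_treeNorm_branch_le (U := U) hb x a a₀
    rwa [hbranch] at h

lemma treeNorm_update_zero_le : ∀ {k : ℕ} {U : Fin k → Ultrafilter ℕ} {u : TreeU X k}
    {q : Fin k}, (∀ i v, ‖u i v‖ ≤ B) → u.WeaklyNullAt U q → ∀ {a : Fin k → ℝ},
    (∀ j, q < j → a j ≠ 0 → u.IgnoresCoord j q) →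
    ∀ x : X, treeNorm U u x (Function.update a q 0) ≤ treeNorm U u x a
  | 0, _, _, q, _, _, _, _, _ => q.elim0
  | k + 1, U, u, q, hb, hw, a, hind, x => by
    cases q using Fin.cases with
    | zero => exact treeNorm_update_first_le hb hw (fun j => hind j.succ (Fin.succ_pos j)) x
    | succ p =>
      rw [treeNorm_succ, treeNorm_succ]
      refine limUnder_le_limUnder (abs_treeNorm_branch_le hb x _) (abs_treeNorm_branch_le hb x a) ?_
      filter_upwards [hw.branch] with a₀ ha₀
      rw [Function.update_of_ne (Fin.succ_ne_zero p).symm,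
        show (fun i => Function.update a p.succ 0 i.succ) = Function.update (fun i => a i.succ) p 0
          from Function.update_comp_eq_of_injective a (Fin.succ_injective _) p 0]
      exact treeNorm_update_zero_le (fun i v => hb i.succ _) ha₀
        (fun j hj hja => (hind j.succ (Fin.succ_lt_succ_iff.2 hj) hja).branch a₀) _

end Drop

lemma treeNorm_ite_mem_le {X : Type*} [NormedAddCommGroup X] [NormedSpace ℝ X] {k : ℕ} {B : ℝ}
    {U : Fin k → Ultrafilter ℕ} {u : TreeU X k} (hb : ∀ i v, ‖u i v‖ ≤ B) {S : Finset (Fin k)}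
    (hw : ∀ q ∈ S, u.WeaklyNullAt U q) (hind : ∀ q ∈ S, ∀ j, q < j → j ∉ S → u.IgnoresCoord j q)
    (x : X) (a : Fin k → ℝ) :
    treeNorm U u x (fun i => if i ∈ S then 0 else a i) ≤ treeNorm U u x a := by
  induction S using Finset.induction_on_min with
  | empty => simp
  | insert q T hqT ih =>
    have hq := Finset.mem_insert_self q T
    have hupd : (fun i => if i ∈ insert q T then 0 else a i)
        = Function.update (fun i => if i ∈ T then 0 else a i) q 0 := by
      funext i
      by_cases hi : i = q <;> simp [hi]
    rw [hupd]
    refine (treeNorm_update_zero_le hb (hw q hq) (fun j hqj hja => hind q hq j hqj ?_) x).trans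
      (ih (fun q' hq' => hw q' (Finset.mem_insert_of_mem hq'))
        fun q' hq' j hj hjT => hind q' (Finset.mem_insert_of_mem hq') j hj ?_)
    · simp only [ne_eq, ite_eq_left_iff, not_forall] at hja
      simp [hja.1, hqj.ne']
    · simp [hjT, ((hqT q' hq').trans hj).ne']

section Rank

variable {k c : ℕ} {S : Finset (Fin k)}

lemma rankIn_pos {j : Fin k} (hj : j ∈ S) : 0 < rankIn S j :=
  Finset.card_pos.2 ⟨j, Finset.mem_filter.2 ⟨hj, le_rfl⟩⟩

lemma rankIn_le_card (j : Fin k) : rankIn S j ≤ S.card := Finset.card_filter_le S _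

lemma rankIn_orderEmbOfFin (hS : S.card = c) (b : Fin c) :
    rankIn S (S.orderEmbOfFin hS b) = b + 1 := by
  have hset : S.filter (· ≤ S.orderEmbOfFin hS b)
      = (Finset.Iic b).map (S.orderEmbOfFin hS).toEmbedding := by
    ext x
    simp only [Finset.mem_filter, Finset.mem_map, Finset.mem_Iic, RelEmbedding.coe_toEmbedding]
    constructor
    · rintro ⟨hxS, hxb⟩
      obtain ⟨i, rfl⟩ : x ∈ Set.range (S.orderEmbOfFin hS) := by
        rwa [Finset.range_orderEmbOfFin]
      exact ⟨i, (OrderEmbedding.le_iff_le _).1 hxb, rfl⟩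
    · rintro ⟨i, hib, rfl⟩
      exact ⟨S.orderEmbOfFin_mem hS i, (OrderEmbedding.le_iff_le _).2 hib⟩
  rw [rankIn, hset, Finset.card_map, Fin.card_Iic]

def rankIndex (S : Finset (Fin k)) (hS : S.card = c) (j : Fin k) (hj : j ∈ S) : Fin c :=
  ⟨rankIn S j - 1, by have := rankIn_pos hj; have := hS ▸ rankIn_le_card (S := S) j; omega⟩

lemma orderEmbOfFin_rankIndex (hS : S.card = c) {j : Fin k} (hj : j ∈ S) :
    S.orderEmbOfFin hS (rankIndex S hS j hj) = j := by
  obtain ⟨b, rfl⟩ : j ∈ Set.range (S.orderEmbOfFin hS) := by rwa [Finset.range_orderEmbOfFin]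
  congr 1
  ext
  simp [rankIndex, rankIn_orderEmbOfFin]

end Rank

section Spread

variable {X : Type*} {k c : ℕ} (S : Finset (Fin k)) (hS : S.card = c)

/-- `spreadLevel S hS s j hj v = s(v_i : i ∈ S, i ≤ j)`; with `S = P` this is level `j ∈ P` of
`s ⊛_P t`. The branch `0` is never taken. -/
def spreadLevel (s : TreeU X c) (j : Fin k) (hj : j ∈ S) (v : Fin (j.1 + 1) → ℕ) : X :=
  s (rankIndex S hS j hj) fun b =>
    if h : (S.orderEmbOfFin hS (Fin.castLE (rankIndex S hS j hj).isLt b)).1 < j.1 + 1 then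
      v ⟨_, h⟩ else 0

variable {S hS}

lemma spreadLevel_congr (s : TreeU X c) {j : Fin k} (hj : j ∈ S) {v w : Fin (j.1 + 1) → ℕ}
    (h : ∀ b, Fin.castLE j.isLt b ∈ S → v b = w b) :
    spreadLevel S hS s j hj v = spreadLevel S hS s j hj w := by
  unfold spreadLevel
  congr 1
  funext b
  split_ifs
  · exact h _ (S.orderEmbOfFin_mem hS _)
  · rfl

lemma ignoresCoord_of_eq_spreadLevel {s : TreeU X c} {u : TreeU X k} {j q : Fin k} (hj : j ∈ S)
    (hu : u j = spreadLevel S hS s j hj) (hq : q ∉ S) : u.IgnoresCoord j q := by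
  intro v w hvw
  rw [hu]
  exact spreadLevel_congr s hj fun b hb =>
    hvw b fun hbq => hq (by rwa [show Fin.castLE j.isLt b = q from Fin.ext hbq] at hb)

end Spread

section SpreadWeaklyNull

variable {X : Type*} [NormedAddCommGroup X] [NormedSpace ℝ X] {k c : ℕ} {S : Finset (Fin k)}
  {hS : S.card = c}

lemma weaklyNullAt_of_eq_spreadLevel {U : Fin k → Ultrafilter ℕ} {s : TreeU X c}
    (hws : WeaklyNullU (fun i => U (S.orderEmbOfFin hS i)) s) {u : TreeU X k} {j : Fin k}
    (hj : j ∈ S) (hu : u j = spreadLevel S hS s j hj) : u.WeaklyNullAt U j := by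
  have hr : S.orderEmbOfFin hS (rankIndex S hS j hj) = j := orderEmbOfFin_rankIndex hS hj
  have hlt : ∀ i : Fin (rankIndex S hS j hj),
      (S.orderEmbOfFin hS (Fin.castLE (rankIndex S hS j hj).isLt.le i)).1 < j := fun i => by
    have := (S.orderEmbOfFin hS).strictMono
      (show Fin.castLE (rankIndex S hS j hj).isLt.le i < rankIndex S hS j hj from i.isLt)
    rwa [hr] at this
  let e : Fin (rankIndex S hS j hj) → Fin j := fun i => ⟨_, hlt i⟩
  have he : StrictMono e := fun i i' h => (S.orderEmbOfFin hS).strictMono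
    (show Fin.castLE _ i < _ from h)
  have hsnoc : ∀ (pre : Fin j → ℕ) (a : ℕ), spreadLevel S hS s j hj (Fin.snoc pre a)
      = s (rankIndex S hS j hj) (Fin.snoc (fun i => pre (e i)) a) := by
    intro pre a
    unfold spreadLevel
    congr 1
    funext b
    cases b using Fin.lastCases with
    | last =>
      have hlast : Fin.castLE (rankIndex S hS j hj).isLt (Fin.last _) = rankIndex S hS j hj :=
        Fin.ext rfl
      simp only [hlast, hr, Fin.snoc_last]
      simp [Fin.snoc]
    | cast i =>
      have hcast : Fin.castLE (rankIndex S hS j hj).isLt i.castSucc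
          = Fin.castLE (rankIndex S hS j hj).isLt.le i := Fin.ext rfl
      simp only [hcast, Fin.snoc_castSucc]
      simp [Fin.snoc, (hlt i).le, Fin.lt_def.2 (hlt i), e]
  refine (iterEventually_comp_strictMono he (hws (rankIndex S hS j hj))).mono fun pre hpre φ => ?_
  simpa only [hu, hsnoc, hr] using hpre φ

end SpreadWeaklyNull

section Intertwine

variable {X : Type*} {l m : ℕ} {P : Finset (Fin (l + m))} (hP : P.card = l)
  (s : TreeU X l) (t : TreeU X m)

lemma intertwine_of_mem {j : Fin (l + m)} (hj : j ∈ P) :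
    intertwine P hP s t j = spreadLevel P hP s j hj :=
  funext fun _ => dif_pos hj

lemma intertwine_of_notMem {j : Fin (l + m)} (hj : j ∉ P) :
    intertwine P hP s t j = spreadLevel Pᶜ (compl_card P hP) t j (Finset.mem_compl.2 hj) :=
  funext fun _ => dif_neg hj

variable {hP s t}

lemma NormalizedU.intertwine [NormedAddCommGroup X] (hs : NormalizedU s) (ht : NormalizedU t) :
    NormalizedU (intertwine P hP s t) := by
  intro j v
  by_cases hj : j ∈ P
  · rw [intertwine_of_mem hP s t hj]
    exact hs _ _
  · rw [intertwine_of_notMem hP s t hj]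
    exact ht _ _

end Intertwine

theorem stmt14_general (X : Type*) [NormedAddCommGroup X] [NormedSpace ℝ X]
    (l m : ℕ) (P : Finset (Fin (l + m))) (hP : P.card = l)
    (U : Fin (l + m) → Ultrafilter ℕ)
    (s : TreeU X l) (t : TreeU X m) (hs : NormalizedU s) (ht : NormalizedU t)
    (hws : WeaklyNullU (fun i => U (P.orderEmbOfFin hP i)) s)
    (hwt : WeaklyNullU (fun j => U (Pᶜ.orderEmbOfFin (compl_card P hP) j)) t) :
    ∀ a : Fin (l + m) → ℝ,
      treeNorm U (intertwine P hP s t) 0 (fun i => if i ∈ P then a i else 0) ≤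
        treeNorm U (intertwine P hP s t) 0 a ∧
      treeNorm U (intertwine P hP s t) 0 (fun i => if i ∈ P then 0 else a i) ≤
        treeNorm U (intertwine P hP s t) 0 a := by
  intro a
  have hb : ∀ i v, ‖intertwine P hP s t i v‖ ≤ 1 := fun i v => (hs.intertwine ht i v).le
  have hwP : ∀ q ∈ P, (intertwine P hP s t).WeaklyNullAt U q := fun q hq =>
    weaklyNullAt_of_eq_spreadLevel hws hq (intertwine_of_mem hP s t hq)
  have hwPc : ∀ q ∈ Pᶜ, (intertwine P hP s t).WeaklyNullAt U q := fun q hq =>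
    weaklyNullAt_of_eq_spreadLevel hwt hq (intertwine_of_notMem hP s t (Finset.mem_compl.1 hq))
  constructor
  · simpa only [Finset.mem_compl, ite_not] using treeNorm_ite_mem_le hb hwPc
      (fun q hq j _ hj => ignoresCoord_of_eq_spreadLevel (Finset.notMem_compl.1 hj)
        (intertwine_of_mem hP s t _) (Finset.mem_compl.1 hq)) 0 a
  · exact treeNorm_ite_mem_le hb hwP (fun q hq j _ hj => ignoresCoord_of_eq_spreadLevel
      (Finset.mem_compl.2 hj) (intertwine_of_notMem hP s t hj) (Finset.notMem_compl.2 hq)) 0 a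

/-- The intertwining projection inequalities: for the `P`-intertwining `u = s ⊛_P t` of
weakly null normalized trees, restricting coefficients to `P` or to `P^c` does not increase
`N_u^{Ū}`. -/
theorem stmt14 (X : Type*) [NormedAddCommGroup X] [NormedSpace ℝ X] [CompleteSpace X]
    (hrefl : Function.Surjective (NormedSpace.inclusionInDoubleDual ℝ X))
    (l m : ℕ) (P : Finset (Fin (l + m))) (hP : P.card = l)
    (U : Fin (l + m) → Ultrafilter ℕ) (hU : ∀ i, FreeUF (U i))
    (s : TreeU X l) (t : TreeU X m) (hs : NormalizedU s) (ht : NormalizedU t)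
    (hws : WeaklyNullU (fun i => U (P.orderEmbOfFin hP i)) s)
    (hwt : WeaklyNullU (fun j => U (Pᶜ.orderEmbOfFin (compl_card P hP) j)) t) :
    ∀ a : Fin (l + m) → ℝ,
      treeNorm U (intertwine P hP s t) 0 (fun i => if i ∈ P then a i else 0) ≤
        treeNorm U (intertwine P hP s t) 0 a ∧
      treeNorm U (intertwine P hP s t) 0 (fun i => if i ∈ P then 0 else a i) ≤
        treeNorm U (intertwine P hP s t) 0 a :=
  stmt14_general X l m P hP U s t hs ht hws hwt
end

section
/- A metric space M is stable if and only if for all 1 ≤ l < k, bounded functions f : [ℕ]^l → M and g : [ℕ]^{k−l} → M, every free ultrafilter U, and every permutation π ∈ S_k preserving the order on {1,...,l} and on {l+1,...,k}: lim_{n₁,U}...lim_{n_k,U} d_M(f(n₁,...,n_l), g(n_{l+1},...,n_k)) = lim_{n₁,U}...lim_{n_k,U} d_M(f(n_{π(1)},...,n_{π(l)}), g(n_{π(l+1)},...,n_{π(k)})). -/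
open Filter Topology
open scoped ZeroAtInfty ENNReal NNReal

/-!
Call a bounded kernel `D : α → β → ℝ` stable when the iterated limits
`lim_{i,U} lim_{j,V} D (a i) (b j)` along free ultrafilters may be exchanged; for bounded `f`, `g`
the kernel `(u, v) ↦ dist (f u) (g v)` is stable when `M` is. Stability survives taking a limit in
one variable: the two limits on that side merge into one limit along the product ultrafilter
`U ⊗ V`, coded on `ℕ` through `Nat.pair`. Peeling off the last coordinate, an induction on the
number of coordinates then shows that the iterated limit of `D (X (n ∘ p)) (Y (n ∘ q))` over two
disjoint increasing blocks `p`, `q` of coordinates equals `lim_u lim_v D (X u) (Y v)`, whatever the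
interleaving of the blocks. Conversely, for `l = m = 1` and `π` the transposition, the hypothesis
applied to `x ∘ fst ∘ unpair` and `y ∘ snd ∘ unpair` along `U ⊗ V` is the stability of `M`.
-/

namespace Ultrafilter

variable {α : Type*}

lemma tendsto_limUnder_of_abs_le (U : Ultrafilter α) {h : α → ℝ} {R : ℝ} (hR : ∀ a, |h a| ≤ R) :
    Tendsto h U (𝓝 (limUnder (U : Filter α) h)) := by
  obtain ⟨c, -, hc⟩ := (isCompact_Icc (a := -R) (b := R)).ultrafilter_le_nhds (U.map h)
    (le_principal_iff.2 (Ultrafilter.mem_map.2 (univ_mem' fun a => abs_le.1 (hR a))))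
  exact tendsto_nhds_limUnder ⟨c, hc⟩

lemma abs_limUnder_le (U : Ultrafilter α) {h : α → ℝ} {R : ℝ} (hR : ∀ a, |h a| ≤ R) :
    |limUnder (U : Filter α) h| ≤ R :=
  le_of_tendsto' (U.tendsto_limUnder_of_abs_le hR).abs hR

end Ultrafilter

lemma Filter.Tendsto.bind {ι β X : Type*} [TopologicalSpace X] {U : Filter ι} {V : ι → Filter β}
    {h : β → X} {φ : ι → X} {x : X} (hV : ∀ i, Tendsto h (V i) (𝓝 (φ i)))
    (hφ : Tendsto φ U (𝓝 x)) : Tendsto h (U.bind V) (𝓝 x) := by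
  intro s hs
  rw [mem_map, mem_bind']
  filter_upwards [hφ (interior_mem_nhds.2 hs)] with i hi
  exact hV i (mem_of_superset (isOpen_interior.mem_nhds hi) interior_subset)

def pairUF (U V : Ultrafilter ℕ) : Ultrafilter ℕ :=
  U.bind fun m => V.map (Nat.pair m)

section pairUF

variable (U V : Ultrafilter ℕ)

lemma mem_pairUF {s : Set ℕ} : s ∈ pairUF U V ↔ {m | Nat.pair m ⁻¹' s ∈ V} ∈ U :=
  mem_bind'

lemma FreeUF.pairUF {V : Ultrafilter ℕ} (hV : FreeUF V) : FreeUF (pairUF U V) := fun _ hs =>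
  (mem_pairUF U V).2 <| univ_mem' fun _ => hV <| (Filter.mem_cofinite.1 hs).preimage
    (Set.injOn_of_injective fun _ _ h => (Nat.pair_eq_pair.1 h).2)

lemma limUnder_pairUF {h : ℕ → ℝ} {R : ℝ} (hR : ∀ p, |h p| ≤ R) :
    limUnder (pairUF U V : Filter ℕ) h =
      limUnder (U : Filter ℕ) fun m => limUnder (V : Filter ℕ) fun n => h (Nat.pair m n) :=
  Tendsto.limUnder_eq <| Tendsto.bind
    (fun _ => tendsto_map'_iff.2 (V.tendsto_limUnder_of_abs_le fun _ => hR _))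
    (U.tendsto_limUnder_of_abs_le fun _ => V.abs_limUnder_le fun _ => hR _)

lemma map_unpair_fst_pairUF : (pairUF U V).map (fun p => p.unpair.1) = U :=
  Ultrafilter.eq_of_le fun _ hs =>
    (mem_pairUF U V).2 <| mem_of_superset hs fun _ hm => univ_mem' fun _ => by simpa using hm

lemma map_unpair_snd_pairUF : (pairUF U V).map (fun p => p.unpair.2) = V :=
  Ultrafilter.eq_of_le fun _ hs =>
    (mem_pairUF U V).2 <| univ_mem' fun _ => by simpa [Set.preimage_preimage] using hs

variable {X : Type*} [TopologicalSpace X] [Nonempty X] (G : ℕ → X)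

lemma limUnder_pairUF_unpair_fst :
    limUnder (pairUF U V : Filter ℕ) (fun p => G p.unpair.1) = limUnder (U : Filter ℕ) G := by
  conv_rhs => rw [← map_unpair_fst_pairUF U V]
  rfl

lemma limUnder_pairUF_unpair_snd :
    limUnder (pairUF U V : Filter ℕ) (fun p => G p.unpair.2) = limUnder (V : Filter ℕ) G := by
  conv_rhs => rw [← map_unpair_snd_pairUF U V]
  rfl

end pairUF

lemma Fin.exists_castSucc_comp_eq {l k : ℕ} {p : Fin l → Fin (k + 1)} (hp : StrictMono p)
    (h : ∀ i, p i ≠ Fin.last k) :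
    ∃ p' : Fin l → Fin k, StrictMono p' ∧ (fun i => (p' i).castSucc) = p :=
  ⟨_, Fin.strictMono_castPred_comp h hp, funext fun _ => Fin.castSucc_castPred _ _⟩

lemma Fin.exists_castSucc_comp_eq_of_last {l k : ℕ} {p : Fin (l + 1) → Fin (k + 1)}
    (hp : StrictMono p) (hlast : p (Fin.last l) = Fin.last k) :
    ∃ p' : Fin l → Fin k, StrictMono p' ∧ ∀ i, p i.castSucc = (p' i).castSucc :=
  let ⟨p', hp', hpp'⟩ := Fin.exists_castSucc_comp_eq (hp.comp Fin.strictMono_castSucc)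
    fun i => ((hp (Fin.castSucc_lt_last i)).trans_eq hlast).ne
  ⟨p', hp', fun i => (congrFun hpp' i).symm⟩

lemma Fin.snoc_comp_of_last {α : Type*} {l k : ℕ} {p : Fin (l + 1) → Fin (k + 1)}
    {p' : Fin l → Fin k} (hlast : p (Fin.last l) = Fin.last k)
    (hp : ∀ i, p i.castSucc = (p' i).castSucc) (n : Fin k → α) (c : α) :
    (fun i => Fin.snoc (α := fun _ => α) n c (p i)) = Fin.snoc (fun i => n (p' i)) c := by
  funext i
  induction i using Fin.lastCases <;> simp [hlast, hp]

lemma isBddMap_iff {α M : Type*} [MetricSpace M] {f : α → M} :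
    IsBddMap f ↔ Bornology.IsBounded (Set.range f) := by
  refine ⟨fun ⟨R, hR⟩ => Metric.isBounded_iff.2 ⟨R, ?_⟩, fun h => ?_⟩
  · rintro _ ⟨x, rfl⟩ _ ⟨y, rfl⟩
    exact hR x y
  · obtain ⟨C, hC⟩ := Metric.isBounded_iff.1 h
    exact ⟨C, fun x y => hC (Set.mem_range_self x) (Set.mem_range_self y)⟩

structure IsStableKernel {α β : Type*} (D : α → β → ℝ) : Prop where
  bdd : ∃ R, ∀ x y, |D x y| ≤ R
  comm : ∀ U V : Ultrafilter ℕ, FreeUF U → FreeUF V → ∀ (a : ℕ → α) (b : ℕ → β),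
    limUnder (U : Filter ℕ) (fun i => limUnder (V : Filter ℕ) fun j => D (a i) (b j)) =
      limUnder (V : Filter ℕ) (fun j => limUnder (U : Filter ℕ) fun i => D (a i) (b j))

namespace IsStableKernel

variable {α β : Type*} {D : α → β → ℝ}

lemma flip (hD : IsStableKernel D) : IsStableKernel fun y x => D x y where
  bdd := let ⟨R, hR⟩ := hD.bdd; ⟨R, fun y x => hR x y⟩
  comm U V hU hV b a := (hD.comm V U hV hU a b).symm

lemma limUnder_right (hD : IsStableKernel D) {W : Ultrafilter ℕ} (hW : FreeUF W) :
    IsStableKernel fun x (y : ℕ → β) => limUnder (W : Filter ℕ) fun c => D x (y c) := by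
  obtain ⟨R, hR⟩ := hD.bdd
  refine ⟨⟨R, fun x y => W.abs_limUnder_le fun _ => hR _ _⟩, fun U V hU hV a b => ?_⟩
  set b' : ℕ → β := fun p => b p.unpair.1 p.unpair.2
  have merge : ∀ x,
      limUnder (V : Filter ℕ) (fun j => limUnder (W : Filter ℕ) fun c => D x (b j c)) =
        limUnder (pairUF V W : Filter ℕ) fun p => D x (b' p) := fun x => by
    simp [b', limUnder_pairUF V W fun _ => hR _ _]
  calc _ = limUnder (U : Filter ℕ) fun i =>
        limUnder (pairUF V W : Filter ℕ) fun p => D (a i) (b' p) := by simp only [merge]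
    _ = limUnder (pairUF V W : Filter ℕ) fun p => limUnder (U : Filter ℕ) fun i => D (a i) (b' p) :=
        hD.comm U _ hU (hW.pairUF V) a b'
    _ = limUnder (V : Filter ℕ) fun j => limUnder (W : Filter ℕ) fun c =>
          limUnder (U : Filter ℕ) fun i => D (a i) (b j c) := by
        simp [b', limUnder_pairUF V W fun _ => U.abs_limUnder_le fun _ => hR _ _]
    _ = _ := by simp only [hD.comm U W hU hW]

lemma limUnder_left (hD : IsStableKernel D) {W : Ultrafilter ℕ} (hW : FreeUF W) :
    IsStableKernel fun (x : ℕ → α) y => limUnder (W : Filter ℕ) fun c => D (x c) y :=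
  (hD.flip.limUnder_right hW).flip

lemma limUnder_ultraLim_comm (hD : IsStableKernel D) {W : Ultrafilter ℕ} (hW : FreeUF W) {m : ℕ}
    (V : Fin m → Ultrafilter ℕ) (hV : ∀ j, FreeUF (V j)) (a : ℕ → α) (Y : (Fin m → ℕ) → β) :
    limUnder (W : Filter ℕ) (fun c => ultraLim m V fun v => D (a c) (Y v)) =
      ultraLim m V fun v => limUnder (W : Filter ℕ) fun c => D (a c) (Y v) := by
  induction m generalizing β D with
  | zero => rfl
  | succ m ih =>
    refine (ih (hD := hD.limUnder_right (hV (Fin.last m))) (hV := fun j => hV j.castSucc)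
      (Y := fun v d => Y (Fin.snoc v d))).trans ?_
    exact congrArg _ (funext fun v => hD.comm W _ hW (hV _) a _)

theorem ultraLim_shuffle (hD : IsStableKernel D) {k : ℕ} (U : Fin k → Ultrafilter ℕ)
    (hU : ∀ i, FreeUF (U i)) {l m : ℕ} {p : Fin l → Fin k} {q : Fin m → Fin k}
    (hp : StrictMono p) (hq : StrictMono q) (hpq : ∀ i j, p i ≠ q j)
    (X : (Fin l → ℕ) → α) (Y : (Fin m → ℕ) → β) :
    ultraLim k U (fun n => D (X fun i => n (p i)) (Y fun j => n (q j))) =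
      ultraLim l (fun i => U (p i)) fun u =>
        ultraLim m (fun j => U (q j)) fun v => D (X u) (Y v) := by
  induction k generalizing α β D l m with
  | zero =>
    cases l with
    | succ => exact (p 0).elim0
    | zero =>
      cases m with
      | succ => exact (q 0).elim0
      | zero =>
        show D _ _ = D _ _
        exact congr (congrArg D (congrArg X (Subsingleton.elim _ _)))
          (congrArg Y (Subsingleton.elim _ _))
  | succ k ih =>
    by_cases hpk : ∃ i, p i = Fin.last k
    · obtain ⟨i₀, hi₀⟩ := hpk
      cases l with
      | zero => exact i₀.elim0
      | succ l =>
      have hlast : p (Fin.last l) = Fin.last k :=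
        Fin.last_le_iff.1 (hi₀ ▸ hp.monotone (Fin.le_last i₀))
      obtain ⟨p', hp', hpi⟩ := Fin.exists_castSucc_comp_eq_of_last hp hlast
      obtain ⟨q', hq', rfl⟩ := Fin.exists_castSucc_comp_eq hq fun j => hlast ▸ (hpq _ j).symm
      simp only [ultraLim, Fin.snoc_comp_of_last hlast hpi, Fin.snoc_castSucc, hpi, hlast]
      -- the last limit, taken inside `X`, has to be moved past all the limits of `Y`
      exact (ih (hD := hD.limUnder_left (hU _)) (hU := fun i => hU i.castSucc) (hp := hp')
        (hq := hq') (hpq := fun i j => by simpa [hpi] using hpq i.castSucc j)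
        (X := fun u c => X (Fin.snoc u c)) (Y := Y)).trans
        (congrArg _ (funext fun u =>
          (hD.limUnder_ultraLim_comm (hU _) _ (fun j => hU _) _ _).symm))
    obtain ⟨p', hp', rfl⟩ := Fin.exists_castSucc_comp_eq hp fun i h => hpk ⟨i, h⟩
    by_cases hqk : ∃ j, q j = Fin.last k
    · obtain ⟨j₀, hj₀⟩ := hqk
      cases m with
      | zero => exact j₀.elim0
      | succ m =>
      have hlast : q (Fin.last m) = Fin.last k :=
        Fin.last_le_iff.1 (hj₀ ▸ hq.monotone (Fin.le_last j₀))
      obtain ⟨q', hq', hqj⟩ := Fin.exists_castSucc_comp_eq_of_last hq hlast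
      simp only [ultraLim, Fin.snoc_comp_of_last hlast hqj, Fin.snoc_castSucc, hqj, hlast]
      exact ih (hD := hD.limUnder_right (hU _)) (hU := fun i => hU i.castSucc) (hp := hp')
        (hq := hq') (hpq := fun i j => by simpa [hqj] using hpq i j.castSucc)
        (X := X) (Y := fun v c => Y (Fin.snoc v c))
    obtain ⟨q', hq', rfl⟩ := Fin.exists_castSucc_comp_eq hq fun j h => hqk ⟨j, h⟩
    simp only [ultraLim, Fin.snoc_castSucc, tendsto_const_nhds.limUnder_eq]
    exact ih (hD := hD) (hU := fun i => hU i.castSucc) (hp := hp') (hq := hq')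
      (hpq := fun i j => by simpa using hpq i j) (X := X) (Y := Y)

end IsStableKernel

lemma StableSpace.isStableKernel_dist {α β M : Type*} [MetricSpace M] (hM : StableSpace M)
    {f : α → M} {g : β → M} (hf : IsBddMap f) (hg : IsBddMap g) :
    IsStableKernel fun x y => dist (f x) (g y) where
  bdd := by
    obtain ⟨C, hC⟩ := Metric.isBounded_iff.1 ((isBddMap_iff.1 hf).union (isBddMap_iff.1 hg))
    exact ⟨C, fun x y => (abs_of_nonneg dist_nonneg).trans_le <|
      hC (.inl (Set.mem_range_self x)) (.inr (Set.mem_range_self y))⟩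
  comm U V hU hV a b := hM U V hU hV (f ∘ a) (g ∘ b)
    ((isBddMap_iff.1 hf).subset (Set.range_comp_subset_range a f))
    ((isBddMap_iff.1 hg).subset (Set.range_comp_subset_range b g))

lemma StableSpace.of_limUnder_swap {M : Type*} [MetricSpace M]
    (H : ∀ x y : ℕ → M, Bornology.IsBounded (Set.range x) → Bornology.IsBounded (Set.range y) →
      ∀ W : Ultrafilter ℕ, FreeUF W →
        limUnder (W : Filter ℕ) (fun a => limUnder (W : Filter ℕ) fun b => dist (x a) (y b)) =
          limUnder (W : Filter ℕ) (fun a => limUnder (W : Filter ℕ) fun b => dist (x b) (y a))) :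
    StableSpace M := by
  intro U V _ hV x y hx hy
  have h := H (fun p => x p.unpair.1) (fun p => y p.unpair.2)
    (hx.subset (Set.range_comp_subset_range _ x)) (hy.subset (Set.range_comp_subset_range _ y))
    (pairUF U V) (hV.pairUF U)
  calc limUnder (U : Filter ℕ) (fun a => limUnder (V : Filter ℕ) fun b => dist (x a) (y b))
      = limUnder (pairUF U V : Filter ℕ) fun p =>
          limUnder (V : Filter ℕ) fun b => dist (x p.unpair.1) (y b) :=
        (limUnder_pairUF_unpair_fst U V fun a =>
          limUnder (V : Filter ℕ) fun b => dist (x a) (y b)).symm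
    _ = limUnder (pairUF U V : Filter ℕ) fun p =>
          limUnder (pairUF U V : Filter ℕ) fun q => dist (x p.unpair.1) (y q.unpair.2) :=
        congrArg _ (funext fun p =>
          (limUnder_pairUF_unpair_snd U V fun b => dist (x p.unpair.1) (y b)).symm)
    _ = limUnder (pairUF U V : Filter ℕ) fun p =>
          limUnder (pairUF U V : Filter ℕ) fun q => dist (x q.unpair.1) (y p.unpair.2) := h
    _ = limUnder (pairUF U V : Filter ℕ) fun p =>
          limUnder (U : Filter ℕ) fun a => dist (x a) (y p.unpair.2) :=
        congrArg _ (funext fun p =>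
          limUnder_pairUF_unpair_fst U V fun a => dist (x a) (y p.unpair.2))
    _ = limUnder (V : Filter ℕ) (fun b => limUnder (U : Filter ℕ) fun a => dist (x a) (y b)) :=
        limUnder_pairUF_unpair_snd U V fun b => limUnder (U : Filter ℕ) fun a => dist (x a) (y b)

/-- Raynaud's characterization (i) ⇔ (iii): a metric space is stable iff iterated limits
along a single free ultrafilter are invariant under order-preserving permutations. -/
theorem stmt17 (M : Type*) [MetricSpace M] :
    StableSpace M ↔
      ∀ l m : ℕ, 0 < l → 0 < m →
        ∀ (f : (Fin l → ℕ) → M) (g : (Fin m → ℕ) → M), IsBddMap f → IsBddMap g →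
          ∀ U : Ultrafilter ℕ, FreeUF U →
            ∀ π : Equiv.Perm (Fin (l + m)), OrderPreservingPerm π →
              ultraLim (l + m) (fun _ => U)
                  (fun n => dist (f (fun i => n (Fin.castAdd m i)))
                    (g (fun j => n (Fin.natAdd l j)))) =
                ultraLim (l + m) (fun _ => U)
                  (fun n => dist (f (fun i => n (π (Fin.castAdd m i))))
                    (g (fun j => n (π (Fin.natAdd l j))))) := by
  constructor
  · intro hM l m _ _ f g hf hg U hU π hπ
    have hD := hM.isStableKernel_dist hf hg
    have hblocks : ∀ (i : Fin l) (j : Fin m), Fin.castAdd m i ≠ Fin.natAdd l j := fun i j h =>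
      absurd (congrArg Fin.val h) (by simp only [Fin.val_castAdd, Fin.val_natAdd]; omega)
    exact (hD.ultraLim_shuffle _ (fun _ => hU) (Fin.strictMono_castAdd m)
      (Fin.strictMono_natAdd l) hblocks id id).trans
      (hD.ultraLim_shuffle _ (fun _ => hU) hπ.1 hπ.2 (fun i j => π.injective.ne (hblocks i j))
        id id).symm
  · refine fun H => StableSpace.of_limUnder_swap fun x y hx hy W hW => ?_
    exact H 1 1 one_pos one_pos (fun v => x (v 0)) (fun v => y (v 0))
      (isBddMap_iff.2 (hx.subset (Set.range_comp_subset_range _ x)))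
      (isBddMap_iff.2 (hy.subset (Set.range_comp_subset_range _ y))) W hW (Equiv.swap 0 1)
      ⟨Subsingleton.strictMono _, Subsingleton.strictMono _⟩
end

section
/- If a Banach space X embeds coarsely into a metric space with property Q, or if the closed unit ball B_X embeds uniformly into a metric space with property Q, then X has property Q; equivalently (by the equivalence of property Q and upper stability), if X embeds coarsely into an upper stable metric space, or B_X embeds uniformly into an upper stable metric space, then X is upper stable. -/
open Filter Topology
open scoped ZeroAtInfty ENNReal NNReal

/-!
An embedding `h` of `X` (or of its unit ball) into `N` transfers concentration at one scale:
if `ψ : [ℕ]^k → X` has slope `t` on the edges of the interlacing graph, then `h ∘ ψ` has slope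
`ω_h(t)`, so property `Q` of `N` makes `h ∘ ψ` concentrate to within `C ω_h(t)` on some
`[L]^k`, and if `C ω_h(t) < ρ_h(s)` this forces `ψ` to concentrate to within `s`. For the
coarse embedding take `t = 1` and `s` large, for the uniform one `s = 1/2` and `t` small.
Because `X` is a normed space, a Lipschitz `f` can be rescaled so that its oscillation on
`[L]^k` becomes `2 s`; one application then halves the oscillation, and iterating brings it
down to `(2 s / t) Lip f`.

For the second statement, upper stability and property `Q` are equivalent with explicit
constants.
-/

section InterlacingGraph

variable {k : ℕ}

lemma dist_le_mul_length_of_forall_adj {V Y : Type*} [PseudoMetricSpace Y]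
    {G : SimpleGraph V} {F : V → Y} {c : ℝ} (hF : ∀ a b, G.Adj a b → dist (F a) (F b) ≤ c) :
    ∀ {u v : V} (p : G.Walk u v), dist (F u) (F v) ≤ c * p.length
  | _, _, .nil => by simp
  | _, _, .cons hadj p => by
    rw [SimpleGraph.Walk.length_cons, Nat.cast_succ, mul_add_one, add_comm]
    exact (dist_triangle _ _ _).trans
      (add_le_add (hF _ _ hadj) (dist_le_mul_length_of_forall_adj hF p))

namespace IncTuple

def window (s : ℕ → ℕ) (hs : StrictMono s) (j : ℕ) : IncTuple k :=
  ⟨fun i => s (i + j), fun _ _ h => hs (Nat.add_lt_add_right h j)⟩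

lemma adj_window_succ (hk : 0 < k) {s : ℕ → ℕ} (hs : StrictMono s) (j : ℕ) :
    (interGraph k).Adj (window s hs j) (window s hs (j + 1)) := by
  refine ⟨fun h => ?_, Or.inl ⟨fun i => hs.monotone (by omega), fun i _ => le_of_eq ?_⟩⟩
  · have := congrFun (congrArg Subtype.val h) ⟨0, hk⟩
    exact (hs (Nat.lt_succ_self j)).ne (by simpa [window] using this)
  · simp only [window]; congr 1; omega

lemma exists_walk_window (hk : 0 < k) {s : ℕ → ℕ} (hs : StrictMono s) (j : ℕ) :
    ∀ d, ∃ p : (interGraph k).Walk (window s hs j) (window s hs (j + d)), p.length = d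
  | 0 => ⟨.nil, rfl⟩
  | d + 1 => by
    obtain ⟨p, hp⟩ := exists_walk_window hk hs j d
    exact ⟨p.concat (adj_window_succ hk hs (j + d)), by simp [hp]⟩

def padAbove (m : IncTuple k) (T t : ℕ) : ℕ := if h : t < k then m.1 ⟨t, h⟩ else T + t

lemma strictMono_padAbove (m : IncTuple k) {T : ℕ} (hT : ∀ i, m.1 i < T) :
    StrictMono (padAbove m T) := by
  intro a b hab
  unfold padAbove
  split_ifs with ha hb hb
  · exact m.2 (Fin.mk_lt_mk.mpr hab)
  · exact (hT _).trans_le (Nat.le_add_right T b)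
  · omega
  · omega

lemma window_padAbove_zero (m : IncTuple k) {T : ℕ} (hT : ∀ i, m.1 i < T) :
    window (padAbove m T) (strictMono_padAbove m hT) 0 = m :=
  Subtype.ext <| funext fun i => by simp [window, padAbove]

lemma window_padAbove_eq (m n : IncTuple k) {T : ℕ} (hm : ∀ i, m.1 i < T)
    (hn : ∀ i, n.1 i < T) (j : ℕ) (hj : k ≤ j) :
    (window (padAbove m T) (strictMono_padAbove m hm) j : IncTuple k) =
      window (padAbove n T) (strictMono_padAbove n hn) j :=
  Subtype.ext <| funext fun i => by simp [window, padAbove, show ¬ i.1 + j < k by omega]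

lemma exists_bound (m n : IncTuple k) : ∃ T, (∀ i, m.1 i < T) ∧ ∀ i, n.1 i < T :=
  ⟨∑ i, (m.1 i + n.1 i) + 1,
    fun i => Nat.lt_succ_of_le ((Nat.le_add_right _ _).trans
      (Finset.single_le_sum (f := fun i => m.1 i + n.1 i) (by simp) (Finset.mem_univ i))),
    fun i => Nat.lt_succ_of_le ((Nat.le_add_left _ _).trans
      (Finset.single_le_sum (f := fun i => m.1 i + n.1 i) (by simp) (Finset.mem_univ i)))⟩

/-- Sliding a window along `m₀, …, m_{k-1}, T + k, T + k + 1, …` walks from `m` to a tuple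
that does not depend on `m`, in `k` steps. -/
lemma exists_walk_length_le (m n : IncTuple k) :
    ∃ p : (interGraph k).Walk m n, p.length ≤ 2 * k := by
  rcases Nat.eq_zero_or_pos k with rfl | hk
  · obtain rfl : m = n := Subtype.ext (funext fun i => i.elim0)
    exact ⟨.nil, le_rfl⟩
  obtain ⟨T, hm, hn⟩ := exists_bound m n
  obtain ⟨p, hp⟩ := exists_walk_window hk (strictMono_padAbove m hm) 0 k
  obtain ⟨q, hq⟩ := exists_walk_window hk (strictMono_padAbove n hn) 0 k
  have hmid := window_padAbove_eq m n hm hn (0 + k) (by omega)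
  refine ⟨(p.append (q.reverse.copy hmid.symm rfl)).copy (window_padAbove_zero m hm)
    (window_padAbove_zero n hn), ?_⟩
  simp [hp, hq]; omega

end IncTuple

lemma interGraph_connected (k : ℕ) : (interGraph k).Connected :=
  (SimpleGraph.connected_iff _).mpr
    ⟨fun m n => (IncTuple.exists_walk_length_le m n).elim fun p _ => ⟨p⟩,
      ⟨⟨Fin.val, Fin.val_strictMono⟩⟩⟩

lemma dI_le_two_mul (m n : IncTuple k) : dI m n ≤ 2 * k :=
  (IncTuple.exists_walk_length_le m n).elim fun p hp => (SimpleGraph.dist_le p).trans hp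

lemma dI_eq_one_of_adj {m n : IncTuple k} (h : (interGraph k).Adj m n) : dI m n = 1 :=
  SimpleGraph.dist_eq_one_iff_adj.mpr h

lemma dist_le_mul_dI_of_adj {Y : Type*} [PseudoMetricSpace Y] {F : IncTuple k → Y} {c : ℝ}
    (hF : ∀ a b, (interGraph k).Adj a b → dist (F a) (F b) ≤ c) (m n : IncTuple k) :
    dist (F m) (F n) ≤ c * dI m n := by
  obtain ⟨p, hp⟩ := (interGraph_connected k).exists_walk_length_eq_dist m n
  rw [dI, ← hp]
  exact dist_le_mul_length_of_forall_adj hF p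

namespace IncTuple

def map (σ : ℕ → ℕ) (hσ : StrictMono σ) (m : IncTuple k) : IncTuple k :=
  ⟨σ ∘ m.1, hσ.comp m.2⟩

lemma map_adj {σ : ℕ → ℕ} (hσ : StrictMono σ) {m n : IncTuple k}
    (h : (interGraph k).Adj m n) : (interGraph k).Adj (map σ hσ m) (map σ hσ n) := by
  obtain ⟨hne, hint⟩ := h
  refine ⟨fun heq => hne (Subtype.ext (funext fun i => hσ.injective
    (congrFun (congrArg Subtype.val heq) i))), ?_⟩
  rcases hint with ⟨h₁, h₂⟩ | ⟨h₁, h₂⟩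
  · exact Or.inl ⟨fun i => hσ.monotone (h₁ i), fun i hi => hσ.monotone (h₂ i hi)⟩
  · exact Or.inr ⟨fun i => hσ.monotone (h₁ i), fun i hi => hσ.monotone (h₂ i hi)⟩

lemma dI_map_le {σ : ℕ → ℕ} (hσ : StrictMono σ) (m n : IncTuple k) :
    dI (map σ hσ m) (map σ hσ n) ≤ dI m n := by
  obtain ⟨p, hp⟩ := (interGraph_connected k).exists_walk_length_eq_dist m n
  have := SimpleGraph.dist_le
    (p.map (⟨map σ hσ, map_adj hσ⟩ : interGraph k →g interGraph k))
  rwa [SimpleGraph.Walk.length_map, hp] at this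

lemma exists_memAll_map_eq {σ : ℕ → ℕ} (hσ : StrictMono σ) {M : Set ℕ} {m : IncTuple k}
    (hm : memAll (σ '' M) m) : ∃ m' : IncTuple k, memAll M m' ∧ map σ hσ m' = m := by
  choose g hgM hg using hm
  refine ⟨⟨g, fun a b hab => hσ.lt_iff_lt.mp ?_⟩, hgM, Subtype.ext (funext hg)⟩
  rw [hg, hg]
  exact m.2 hab

lemma memAll_map_nth {L : Set ℕ} (hL : L.Infinite) (m : IncTuple k) :
    memAll L (map (Nat.nth (· ∈ L)) (Nat.nth_strictMono hL) m) :=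
  fun _ => Nat.nth_mem_of_infinite hL _

end IncTuple

end InterlacingGraph

section Embeddings

variable {M N : Type*} [MetricSpace M] [MetricSpace N]

lemma edist_le_omegaMod (h : M → N) {x y : M} {t : ℝ} (hd : dist x y ≤ t) :
    edist (h x) (h y) ≤ omegaMod h t :=
  le_iSup_of_le (⟨(x, y), hd⟩ : {p : M × M // dist p.1 p.2 ≤ t}) le_rfl

lemma rhoMod_le_edist (h : M → N) {x y : M} {t : ℝ} (hd : t ≤ dist x y) :
    rhoMod h t ≤ edist (h x) (h y) :=
  iInf_le_of_le (⟨(x, y), hd⟩ : {p : M × M // t ≤ dist p.1 p.2}) le_rfl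

lemma exists_infinite_dist_lt_of_omegaMod_lt_rhoMod {C t s : ℝ} (hQ : HasPropQConst N C)
    (h : M → N) (hω : omegaMod h t ≠ ⊤) (hωρ : ENNReal.ofReal C * omegaMod h t < rhoMod h s)
    {k : ℕ} (ψ : IncTuple k → M) (hψ : ∀ m n, dist (ψ m) (ψ n) ≤ t * dI m n) :
    ∃ L : Set ℕ, L.Infinite ∧ ∀ m n, memAll L m → memAll L n → dist (ψ m) (ψ n) < s := by
  have hadj : ∀ m n, (interGraph k).Adj m n →
      dist ((h ∘ ψ) m) ((h ∘ ψ) n) ≤ (omegaMod h t).toReal := by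
    intro m n hmn
    rw [dist_edist]
    refine ENNReal.toReal_mono hω (edist_le_omegaMod h ?_)
    simpa [dI_eq_one_of_adj hmn] using hψ m n
  obtain ⟨L, hL, hconc⟩ := hQ k (h ∘ ψ) _ ENNReal.toReal_nonneg (dist_le_mul_dI_of_adj hadj)
  refine ⟨L, hL, fun m n hm hn => not_le.mp fun hs => hωρ.not_ge ?_⟩
  calc rhoMod h s ≤ edist (h (ψ m)) (h (ψ n)) := rhoMod_le_edist h hs
    _ = ENNReal.ofReal (dist (h (ψ m)) (h (ψ n))) := edist_dist _ _
    _ ≤ ENNReal.ofReal (C * (omegaMod h t).toReal) := ENNReal.ofReal_le_ofReal (hconc m n hm hn)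
    _ = ENNReal.ofReal C * omegaMod h t := by
      rw [ENNReal.ofReal_mul' ENNReal.toReal_nonneg, ENNReal.ofReal_toReal hω]

/-- Property `Q` at a single scale, for maps of slope `t` into the ball of radius `2 s`. -/
def SmallConcentration (X : Type*) [NormedAddCommGroup X] (s t : ℝ) : Prop :=
  ∀ (k : ℕ) (ψ : IncTuple k → X), (∀ m, ‖ψ m‖ ≤ 2 * s) →
    (∀ m n, dist (ψ m) (ψ n) ≤ t * dI m n) →
    ∃ L : Set ℕ, L.Infinite ∧ ∀ m n, memAll L m → memAll L n → dist (ψ m) (ψ n) ≤ s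

lemma CoarseEmbMod.exists_smallConcentration {X : Type*} [NormedAddCommGroup X] {C : ℝ}
    (hQ : HasPropQConst N C) {h : X → N} (hh : CoarseEmbMod h) :
    ∃ s > 0, SmallConcentration X s 1 := by
  obtain ⟨s, hρ, hs⟩ := ((hh.2.eventually (lt_mem_nhds
    (ENNReal.mul_lt_top ENNReal.ofReal_lt_top (hh.1 1)))).and (eventually_gt_atTop 0)).exists
  refine ⟨s, hs, fun k ψ _ hψ => ?_⟩
  obtain ⟨L, hL, hLs⟩ := exists_infinite_dist_lt_of_omegaMod_lt_rhoMod hQ h (hh.1 1).ne hρ ψ hψ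
  exact ⟨L, hL, fun m n hm hn => (hLs m n hm hn).le⟩

lemma UniformEmbMod.exists_smallConcentration {X : Type*} [NormedAddCommGroup X] {C : ℝ}
    (hQ : HasPropQConst N C) {h : Metric.closedBall (0 : X) 1 → N} (hh : UniformEmbMod h) :
    ∃ t > 0, SmallConcentration X (1 / 2) t := by
  have hlim : Tendsto (fun t => ENNReal.ofReal C * omegaMod h t) (𝓝[>] 0) (𝓝 0) := by
    simpa using ENNReal.Tendsto.const_mul hh.1 (Or.inr ENNReal.ofReal_ne_top)
  obtain ⟨t, ⟨hωρ, hω⟩, ht⟩ := (((hlim.eventually (gt_mem_nhds (hh.2 _ one_half_pos))).and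
    (hh.1.eventually (gt_mem_nhds one_pos))).and self_mem_nhdsWithin).exists
  refine ⟨t, ht, fun k ψ hψb hψ => ?_⟩
  let ψ' : IncTuple k → Metric.closedBall (0 : X) 1 :=
    fun m => ⟨ψ m, by simpa using (hψb m).trans_eq (by norm_num)⟩
  obtain ⟨L, hL, hLs⟩ :=
    exists_infinite_dist_lt_of_omegaMod_lt_rhoMod hQ h hω.ne_top hωρ ψ' hψ
  exact ⟨L, hL, fun m n hm hn => (hLs m n hm hn).le⟩

end Embeddings

section Rescaling

variable {X : Type*} [NormedAddCommGroup X] [NormedSpace ℝ X] {s t : ℝ} {k : ℕ}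

/-- For fixed `o ∈ [L]^k`, the map `(2 s / D) • (f - f o)` on `[L]^k` has size `2 s` and slope
at most `t`. -/
lemma SmallConcentration.exists_infinite_dist_le_half (hconc : SmallConcentration X s t)
    (hs : 0 < s) {f : IncTuple k → X} {K D : ℝ} (hK : 0 ≤ K)
    (hf : ∀ m n, dist (f m) (f n) ≤ K * dI m n) (hD : 0 < D) (hKD : 2 * s * K ≤ t * D)
    {L : Set ℕ} (hL : L.Infinite) (hLD : ∀ m n, memAll L m → memAll L n → dist (f m) (f n) ≤ D) :
    ∃ L' : Set ℕ, L'.Infinite ∧ ∀ m n, memAll L' m → memAll L' n → dist (f m) (f n) ≤ D / 2 := by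
  set e := Nat.nth (· ∈ L)
  have he : StrictMono e := Nat.nth_strictMono hL
  have hfe : ∀ m n, dist (f (IncTuple.map e he m)) (f (IncTuple.map e he n)) ≤ D := fun m n =>
    hLD _ _ (IncTuple.memAll_map_nth hL m) (IncTuple.memAll_map_nth hL n)
  set c := 2 * s / D
  have hc : 0 < c := by positivity
  set o : IncTuple k := IncTuple.map e he ⟨Fin.val, Fin.val_strictMono⟩
  set ψ : IncTuple k → X := fun m => c • (f (IncTuple.map e he m) - f o)
  have hψ : ∀ m n,
      dist (ψ m) (ψ n) = c * dist (f (IncTuple.map e he m)) (f (IncTuple.map e he n)) := by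
    intro m n
    simp only [ψ, dist_eq_norm, ← smul_sub, sub_sub_sub_cancel_right, norm_smul,
      Real.norm_of_nonneg hc.le]
  have hψb : ∀ m, ‖ψ m‖ ≤ 2 * s := fun m => by
    calc ‖ψ m‖ = c * dist (f (IncTuple.map e he m)) (f o) := by
          simp only [ψ, norm_smul, Real.norm_of_nonneg hc.le, dist_eq_norm]
      _ ≤ c * D := by gcongr; exact hfe m _
      _ = 2 * s := div_mul_cancel₀ _ hD.ne'
  have hψK : ∀ m n, dist (ψ m) (ψ n) ≤ t * dI m n := fun m n => by
    have hcK : c * K ≤ t := by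
      rw [div_mul_eq_mul_div, div_le_iff₀ hD]; linarith
    calc dist (ψ m) (ψ n) ≤ c * (K * dI (IncTuple.map e he m) (IncTuple.map e he n)) := by
          rw [hψ]; gcongr; exact hf _ _
      _ ≤ c * (K * dI m n) := by gcongr; exact_mod_cast IncTuple.dI_map_le he m n
      _ ≤ t * dI m n := by rw [← mul_assoc]; gcongr
  obtain ⟨M, hM, hMs⟩ := hconc k ψ hψb hψK
  refine ⟨e '' M, hM.image he.injective.injOn, fun m n hm hn => ?_⟩
  obtain ⟨m', hm'M, rfl⟩ := IncTuple.exists_memAll_map_eq he hm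
  obtain ⟨n', hn'M, rfl⟩ := IncTuple.exists_memAll_map_eq he hn
  have := hMs m' n' hm'M hn'M
  rw [hψ, ← le_div_iff₀' hc] at this
  exact this.trans_eq (by simp only [c]; field_simp)

lemma SmallConcentration.hasPropQConst (hconc : SmallConcentration X s t) (hs : 0 < s)
    (ht : 0 < t) : HasPropQConst X (2 * s / t) := by
  intro k f K hK hf
  rcases hK.eq_or_lt with rfl | hK
  · exact ⟨Set.univ, Set.infinite_univ, fun m n _ _ => by simpa using hf m n⟩
  set B := 2 * s / t * K
  have hB : 0 < B := by positivity
  have key : ∀ j : ℕ, ∃ L : Set ℕ, L.Infinite ∧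
      ∀ m n, memAll L m → memAll L n → dist (f m) (f n) ≤ max B (2 * k * K / 2 ^ j) := by
    intro j
    induction j with
    | zero =>
      refine ⟨Set.univ, Set.infinite_univ, fun m n _ _ => le_max_of_le_right ?_⟩
      calc dist (f m) (f n) ≤ K * dI m n := hf m n
        _ ≤ K * (2 * k) := by gcongr; exact_mod_cast dI_le_two_mul m n
        _ = 2 * k * K / 2 ^ 0 := by ring
    | succ j ih =>
      obtain ⟨L, hL, hLD⟩ := ih
      rcases le_or_gt (2 * k * K / 2 ^ j) B with hle | hlt
      · exact ⟨L, hL, fun m n hm hn => (hLD m n hm hn).trans (by simp [hle])⟩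
      rw [max_eq_right hlt.le] at hLD
      have hKD : 2 * s * K ≤ t * (2 * k * K / 2 ^ j) := by
        have : 2 * s / t * K ≤ _ := hlt.le
        rw [div_mul_eq_mul_div, div_le_iff₀ ht] at this
        linarith
      obtain ⟨L', hL', hL'D⟩ :=
        hconc.exists_infinite_dist_le_half hs hK.le hf (hB.trans hlt) hKD hL hLD
      exact ⟨L', hL', fun m n hm hn =>
        le_max_of_le_right ((hL'D m n hm hn).trans_eq (by rw [pow_succ]; ring))⟩
  obtain ⟨j, hj⟩ := pow_unbounded_of_one_lt (2 * k * K / B) one_lt_two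
  obtain ⟨L, hL, hLD⟩ := key j
  refine ⟨L, hL, fun m n hm hn => (hLD m n hm hn).trans_eq (max_eq_left ?_)⟩
  rw [div_lt_iff₀ hB] at hj
  rw [div_le_iff₀ (by positivity)]
  linarith

end Rescaling

theorem hasPropQ_of_embedding {X : Type*} [NormedAddCommGroup X] [NormedSpace ℝ X]
    {N : Type*} [MetricSpace N] (hN : HasPropQ N)
    (hemb : (∃ h : X → N, CoarseEmbMod h) ∨
      ∃ h : Metric.closedBall (0 : X) 1 → N, UniformEmbMod h) :
    HasPropQ X := by
  obtain ⟨C, -, hC⟩ := hN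
  rcases hemb with ⟨h, hh⟩ | ⟨h, hh⟩
  · obtain ⟨s, hs, hconc⟩ := hh.exists_smallConcentration hC
    exact ⟨_, by positivity, hconc.hasPropQConst hs one_pos⟩
  · obtain ⟨t, ht, hconc⟩ := hh.exists_smallConcentration hC
    exact ⟨_, by positivity, hconc.hasPropQConst one_half_pos ht⟩

lemma exists_infinite_forall_iff (p : ℕ → Prop) :
    ∃ I : Set ℕ, I.Infinite ∧ ∃ b : Prop, ∀ n ∈ I, (p n ↔ b) := by
  by_cases h : {n | p n}.Infinite
  · exact ⟨_, h, True, fun n hn => iff_true_intro hn⟩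
  · exact ⟨_, (Set.not_infinite.mp h).infinite_compl, False, fun n hn => iff_false_intro hn⟩

/-- Along a decreasing sequence of infinite sets `S n` with `x n = min (S n)`, the colour of
`(x n, v)` is constant for `v ∈ [S (n+1)]^r`; the `x n` whose constant colour is the same for
infinitely many `n` form `L'`. -/
theorem exists_infinite_ramsey :
    ∀ (r : ℕ) (c : (Fin r → ℕ) → Prop) (L : Set ℕ), L.Infinite →
      ∃ L' ⊆ L, L'.Infinite ∧ ∃ b : Prop, ∀ v : Fin r → ℕ, StrictMono v → (∀ i, v i ∈ L') →
        (c v ↔ b)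
  | 0, c, L, hL => ⟨L, subset_rfl, hL, c Fin.elim0, fun v _ _ => by
      rw [Subsingleton.elim v Fin.elim0]⟩
  | r + 1, c, L, hL => by
    have step : ∀ S : Set ℕ, S.Infinite → ∃ S' ⊆ S \ Set.Iic (sInf S), S'.Infinite ∧
        ∃ b : Prop, ∀ v : Fin r → ℕ, StrictMono v → (∀ i, v i ∈ S') →
          (c (Fin.cons (sInf S) v) ↔ b) := fun S hS =>
      exists_infinite_ramsey r _ _ (hS.sdiff (Set.finite_Iic (sInf S)))
    choose! next hnext hnext_inf col hcol using step
    set S : ℕ → Set ℕ := fun n => next^[n] L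
    have hS_succ : ∀ n, S (n + 1) = next (S n) := fun n => Function.iterate_succ_apply' _ _ _
    have hS_inf : ∀ n, (S n).Infinite := by
      intro n
      induction n with
      | zero => exact hL
      | succ n ih => rw [hS_succ]; exact hnext_inf _ ih
    set x : ℕ → ℕ := fun n => sInf (S n)
    have hx_mem : ∀ n, x n ∈ S n := fun n => Nat.sInf_mem (hS_inf n).nonempty
    have hS_anti : Antitone S := antitone_nat_of_succ_le fun n => by
      rw [hS_succ]; exact (hnext _ (hS_inf n)).trans Set.sdiff_subset
    have hx_mono : StrictMono x := strictMono_nat_of_lt_succ fun n => by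
      have := hnext _ (hS_inf n) (hS_succ n ▸ hx_mem (n + 1))
      exact not_le.mp this.2
    obtain ⟨I, hI, b, hIb⟩ := exists_infinite_forall_iff fun n => col (S n)
    refine ⟨x '' I, ?_, hI.image hx_mono.injective.injOn, b, fun v hv hvI => ?_⟩
    · rintro _ ⟨n, -, rfl⟩
      exact hS_anti (Nat.zero_le n) (hx_mem n)
    obtain ⟨n₀, hn₀, hv₀⟩ := hvI 0
    have htail : ∀ i, Fin.tail v i ∈ next (S n₀) := by
      intro i
      obtain ⟨n, -, hvn⟩ := hvI i.succ
      have : n₀ < n := hx_mono.lt_iff_lt.mp (by rw [hv₀, hvn]; exact hv (Fin.succ_pos i))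
      rw [← hS_succ, Fin.tail, ← hvn]
      exact hS_anti this (hx_mem n)
    rw [← hIb n₀ hn₀, ← hcol _ (hS_inf n₀) _ (hv.comp (Fin.strictMono_succ)) htail]
    change c v ↔ c (Fin.cons (x n₀) (Fin.tail v))
    rw [hv₀, Fin.cons_self_tail]

section UpperStability

variable {k : ℕ}

lemma IncTuple.exists_memAll_ordLT {L : Set ℕ} (hL : L.Infinite) (m n : IncTuple k) :
    ∃ p : IncTuple k, memAll L p ∧ ordLT m p ∧ ordLT n p := by
  obtain ⟨T, hm, hn⟩ := m.exists_bound n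
  have he := Nat.nth_strictMono hL
  refine ⟨⟨fun i => Nat.nth (· ∈ L) (T + i), fun i j hij => he (by simpa using hij)⟩,
    fun i => Nat.nth_mem_of_infinite hL _, fun i j => ?_, fun i j => ?_⟩
  · exact (hm i).trans_le ((Nat.le_add_right T j).trans (he.id_le _))
  · exact (hn i).trans_le ((Nat.le_add_right T j).trans (he.id_le _))

lemma IncTuple.strictMono_append {m n : IncTuple k} (h : ordLT m n) :
    StrictMono (Fin.append m.1 n.1) := by
  intro a b hab
  induction a using Fin.addCases with
  | left i =>
    induction b using Fin.addCases with
    | left j =>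
      rw [Fin.append_left, Fin.append_left]
      exact m.2 (by simpa only [Fin.lt_def, Fin.val_castAdd] using hab)
    | right j => rw [Fin.append_left, Fin.append_right]; exact h i j
  | right i =>
    induction b using Fin.addCases with
    | left j =>
      simp only [Fin.lt_def, Fin.val_castAdd, Fin.val_natAdd] at hab; omega
    | right j =>
      rw [Fin.append_right, Fin.append_right]
      exact n.2 (by simpa only [Fin.lt_def, Fin.val_natAdd, add_lt_add_iff_left] using hab)

lemma IncTuple.memAll_append {L : Set ℕ} {m n : IncTuple k} (hm : memAll L m)
    (hn : memAll L n) (p : Fin (k + k)) : Fin.append m.1 n.1 p ∈ L := by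
  induction p using Fin.addCases with
  | left i => rw [Fin.append_left]; exact hm i
  | right i => rw [Fin.append_right]; exact hn i

lemma IncTuple.append_castAdd (m n : IncTuple k) :
    (fun i => Fin.append m.1 n.1 (Fin.castAdd k i)) = m.1 :=
  funext (Fin.append_left _ _)

lemma IncTuple.append_natAdd (m n : IncTuple k) :
    (fun j => Fin.append m.1 n.1 (Fin.natAdd k j)) = n.1 :=
  funext (Fin.append_right _ _)

lemma dist_le_two_mul_of_ordLT {Y : Type*} [PseudoMetricSpace Y] {f : IncTuple k → Y}
    {L : Set ℕ} (hL : L.Infinite) {D : ℝ}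
    (hD : ∀ m n : IncTuple k, memAll L m → memAll L n → ordLT m n → dist (f m) (f n) ≤ D)
    {m n : IncTuple k} (hm : memAll L m) (hn : memAll L n) : dist (f m) (f n) ≤ 2 * D := by
  obtain ⟨p, hp, hmp, hnp⟩ := IncTuple.exists_memAll_ordLT hL m n
  calc dist (f m) (f n) ≤ dist (f m) (f p) + dist (f n) (f p) := dist_triangle_right _ _ _
    _ ≤ D + D := add_le_add (hD m p hm hp hmp) (hD n p hn hp hnp)
    _ = 2 * D := by ring

noncomputable def interleave (k : ℕ) : Equiv.Perm (Fin (k + k)) :=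
  Equiv.ofBijective (Fin.addCases (fun i => ⟨2 * i, by omega⟩) fun j => ⟨2 * j + 1, by omega⟩)
    (Finite.injective_iff_bijective.mp fun a b hab => by
      induction a using Fin.addCases <;> induction b using Fin.addCases <;>
        simp only [Fin.addCases_left, Fin.addCases_right, Fin.mk.injEq] at hab <;>
        first | omega | (simp only [Fin.ext_iff, Fin.val_castAdd, Fin.val_natAdd]; omega))

lemma interleave_castAdd (i : Fin k) : (interleave k (Fin.castAdd k i)).1 = 2 * i := by
  simp only [interleave, Equiv.ofBijective_apply, Fin.addCases_left]

lemma interleave_natAdd (j : Fin k) : (interleave k (Fin.natAdd k j)).1 = 2 * j + 1 := by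
  simp only [interleave, Equiv.ofBijective_apply, Fin.addCases_right]

lemma orderPreservingPerm_interleave (k : ℕ) : OrderPreservingPerm (interleave k) := by
  constructor <;> intro i j hij <;>
    simp only [Fin.lt_def, interleave_castAdd, interleave_natAdd] at hij ⊢ <;> omega

lemma interGraph_adj_interleave (hk : 0 < k) {n : Fin (k + k) → ℕ} (hn : StrictMono n) :
    (interGraph k).Adj
      ⟨fun i => n (interleave k (Fin.castAdd k i)), hn.comp (orderPreservingPerm_interleave k).1⟩
      ⟨fun j => n (interleave k (Fin.natAdd k j)),
        hn.comp (orderPreservingPerm_interleave k).2⟩ := by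
  have hlt : ∀ i j : Fin k, i.1 ≤ j.1 →
      interleave k (Fin.castAdd k i) < interleave k (Fin.natAdd k j) := fun i j hij => by
    simp only [Fin.lt_def, interleave_castAdd, interleave_natAdd]; omega
  refine ⟨fun h => (hn (hlt ⟨0, hk⟩ ⟨0, hk⟩ le_rfl)).ne
      (congrFun (congrArg Subtype.val h) ⟨0, hk⟩),
    Or.inl ⟨fun i => (hn (hlt i i le_rfl)).le, fun i hi => (hn ?_).le⟩⟩
  simp only [Fin.lt_def, interleave_castAdd, interleave_natAdd]; omega

end UpperStability

section ExtendTuple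

variable {k : ℕ} {N : Type*}

noncomputable def extendTuple (f : IncTuple k → N) : (Fin k → ℕ) → N :=
  Function.extend Subtype.val f fun _ => f ⟨Fin.val, Fin.val_strictMono⟩

lemma extendTuple_apply (f : IncTuple k → N) {v : Fin k → ℕ} (hv : StrictMono v) :
    extendTuple f v = f ⟨v, hv⟩ :=
  Subtype.val_injective.extend_apply f _ ⟨v, hv⟩

lemma exists_extendTuple_eq (f : IncTuple k → N) (v : Fin k → ℕ) :
    ∃ m, extendTuple f v = f m := by
  by_cases h : ∃ m : IncTuple k, m.1 = v
  · obtain ⟨m, rfl⟩ := h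
    exact ⟨m, extendTuple_apply f m.2⟩
  · exact ⟨_, Function.extend_apply' _ _ _ h⟩

lemma isBddMap_extendTuple [MetricSpace N] {f : IncTuple k → N} {K : ℝ} (hK : 0 ≤ K)
    (hf : ∀ m n, dist (f m) (f n) ≤ K * dI m n) : IsBddMap (extendTuple f) := by
  refine ⟨K * (2 * k), fun v w => ?_⟩
  obtain ⟨m, hm⟩ := exists_extendTuple_eq f v
  obtain ⟨n, hn⟩ := exists_extendTuple_eq f w
  rw [hm, hn]
  exact (hf m n).trans (by gcongr; exact_mod_cast dI_le_two_mul m n)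

lemma sSup_permDistSet_interleave_le [MetricSpace N] (hk : 0 < k) {f : IncTuple k → N} {K : ℝ}
    (hK : 0 ≤ K) (hf : ∀ m n, dist (f m) (f n) ≤ K * dI m n) (L : Set ℕ) :
    sSup (permDistSet (extendTuple f) (extendTuple f) L (interleave k)) ≤ K := by
  refine Real.sSup_le ?_ hK
  rintro d ⟨n, hn, -, rfl⟩
  rw [extendTuple_apply f (v := fun i => n (interleave k (Fin.castAdd k i)))
      (hn.comp (orderPreservingPerm_interleave k).1),
    extendTuple_apply f (v := fun j => n (interleave k (Fin.natAdd k j)))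
      (hn.comp (orderPreservingPerm_interleave k).2)]
  exact (hf _ _).trans_eq (by
    rw [dI_eq_one_of_adj (interGraph_adj_interleave hk hn), Nat.cast_one, mul_one])

end ExtendTuple

/-- Ramsey's theorem makes `d (f m, f n) ≤ (C + 1) K` either hold for all `m < n` in some
`[L]^k`, or fail for all of them; in the second case upper stability, applied to the
interleaved arrangement whose pairs are adjacent, gives `(C + 1) K ≤ C K`. -/
theorem hasPropQConst_of_upperStableWith {N : Type*} [MetricSpace N] {C : ℝ} (hC : 0 ≤ C)
    (hUS : UpperStableWith N C) : HasPropQConst N (2 * C + 2) := by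
  intro k f K hK hf
  rcases hK.eq_or_lt with rfl | hK
  · exact ⟨Set.univ, Set.infinite_univ, fun m n _ _ => by simpa using hf m n⟩
  rcases Nat.eq_zero_or_pos k with rfl | hk
  · refine ⟨Set.univ, Set.infinite_univ, fun m n _ _ => ?_⟩
    rw [show m = n from Subtype.ext (funext fun i => i.elim0), dist_self]
    positivity
  obtain ⟨L, -, hL, b, hb⟩ := exists_infinite_ramsey (k + k)
    (fun v => dist (extendTuple f fun i => v (Fin.castAdd k i))
      (extendTuple f fun j => v (Fin.natAdd k j)) ≤ (C + 1) * K)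
    Set.univ Set.infinite_univ
  by_cases hb' : b
  · refine ⟨L, hL, fun m n hm hn => (dist_le_two_mul_of_ordLT (D := (C + 1) * K) hL
      (fun m n hm hn hmn => ?_) hm hn).trans_eq (by ring)⟩
    have := (hb _ (IncTuple.strictMono_append hmn) (IncTuple.memAll_append hm hn)).mpr hb'
    rwa [IncTuple.append_castAdd, IncTuple.append_natAdd, extendTuple_apply f m.2,
      extendTuple_apply f n.2] at this
  have hInf :
      (C + 1) * K ≤ sInf (permDistSet (extendTuple f) (extendTuple f) L (Equiv.refl _)) := by
    refine le_csInf ⟨_, _, (Nat.nth_strictMono hL).comp Fin.val_strictMono,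
      fun p => Nat.nth_mem_of_infinite hL p, rfl⟩ ?_
    rintro d ⟨n, hn, hnL, rfl⟩
    exact (not_le.mp fun h => hb' ((hb n hn hnL).mp h)).le
  have := hUS k k _ _ (isBddMap_extendTuple hK.le hf) (isBddMap_extendTuple hK.le hf) L hL
    (interleave k) (orderPreservingPerm_interleave k)
  linarith [mul_le_mul_of_nonneg_left (sSup_permDistSet_interleave_le hk hK.le hf L) hC]

section CutAndPaste

variable {l r : ℕ}

/-- Common values, on the slots outside `range σ`, of increasing completions of `x` and `y`. -/
def gapFill (σ : Fin l → Fin r) (x y : Fin l → ℕ) (p : Fin r) : ℕ :=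
  (Finset.univ.filter fun i => σ i < p).sup (fun i => max (x i) (y i)) + p

lemma gapFill_comm (σ : Fin l → Fin r) (x y : Fin l → ℕ) : gapFill σ x y = gapFill σ y x := by
  funext p; simp only [gapFill, max_comm]

lemma strictMono_extend_gapFill {σ : Fin l → Fin r} (hσ : StrictMono σ) {x y : Fin l → ℕ}
    (hbot : ∀ i, r ≤ x i) (hgap : ∀ i j, i < j → max (x i) (y i) + r < x j) :
    StrictMono (Function.extend σ x (gapFill σ x y)) := by
  intro p q hpq
  have hsup_le : ∀ {p : Fin r} (i : Fin l), σ i < p → max (x i) (y i) ≤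
      (Finset.univ.filter fun i => σ i < p).sup (fun i => max (x i) (y i)) := fun i hi =>
    Finset.le_sup (f := fun i => max (x i) (y i)) (Finset.mem_filter.mpr ⟨Finset.mem_univ _, hi⟩)
  by_cases hp : ∃ i, σ i = p <;> by_cases hq : ∃ j, σ j = q
  · obtain ⟨i, rfl⟩ := hp
    obtain ⟨j, rfl⟩ := hq
    rw [hσ.injective.extend_apply, hσ.injective.extend_apply]
    have := hgap i j (hσ.lt_iff_lt.mp hpq)
    omega
  · obtain ⟨i, rfl⟩ := hp
    rw [hσ.injective.extend_apply, Function.extend_apply' _ _ _ hq, gapFill]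
    have := hsup_le i hpq
    have : (σ i).1 < q.1 := hpq
    omega
  · obtain ⟨j, rfl⟩ := hq
    rw [Function.extend_apply' _ _ _ hp, hσ.injective.extend_apply, gapFill]
    have : (Finset.univ.filter fun i => σ i < p).sup (fun i => max (x i) (y i)) ≤ x j - r :=
      Finset.sup_le fun i hi => by
        have := hgap i j (hσ.lt_iff_lt.mp ((Finset.mem_filter.mp hi).2.trans hpq))
        omega
    have := hbot j
    have := p.isLt
    omega
  · rw [Function.extend_apply' _ _ _ hp, Function.extend_apply' _ _ _ hq, gapFill, gapFill]
    have : (Finset.univ.filter fun i => σ i < p).sup (fun i => max (x i) (y i)) ≤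
        (Finset.univ.filter fun i => σ i < q).sup (fun i => max (x i) (y i)) :=
      Finset.sup_mono fun i hi => Finset.mem_filter.mpr
        ⟨Finset.mem_univ _, (Finset.mem_filter.mp hi).2.trans hpq⟩
    have : p.1 < q.1 := hpq
    omega

variable {m : ℕ} {Y : Type*} [PseudoMetricSpace Y] {σ : Fin l → Fin r} {τ : Fin m → Fin r}
  {φ : (Fin l → ℕ) → Y} {ψ : (Fin m → ℕ) → Y} {S : ℝ}

/-- If `x` and `y` are spread out enough to be completed by common values on the slots of `τ`,
then `φ x` and `φ y` are both within `S` of the same `ψ`-value. -/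
lemma dist_le_two_mul_of_gap (hσ : StrictMono σ) (hστ : ∀ i j, σ i ≠ τ j)
    (hS : ∀ w : Fin r → ℕ, StrictMono w → dist (φ (w ∘ σ)) (ψ (w ∘ τ)) ≤ S)
    {x y : Fin l → ℕ} (hx : ∀ i, r ≤ x i) (hy : ∀ i, r ≤ y i)
    (hgap : ∀ i j, i < j → max (x i) (y i) + r < min (x j) (y j)) :
    dist (φ x) (φ y) ≤ 2 * S := by
  have hw := strictMono_extend_gapFill hσ hx fun i j hij =>
    (hgap i j hij).trans_le (min_le_left _ _)
  have hw' := strictMono_extend_gapFill hσ hy fun i j hij => by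
    rw [max_comm]; exact (hgap i j hij).trans_le (min_le_right _ _)
  rw [gapFill_comm] at hw'
  have hσx : ∀ z : Fin l → ℕ, Function.extend σ z (gapFill σ x y) ∘ σ = z := fun z =>
    funext (hσ.injective.extend_apply z _)
  have hτ : ∀ z : Fin l → ℕ, Function.extend σ z (gapFill σ x y) ∘ τ = gapFill σ x y ∘ τ :=
    fun z => funext fun j => Function.extend_apply' _ _ _ fun ⟨i, hi⟩ => hστ i j hi
  have h₁ := hS _ hw
  have h₂ := hS _ hw'
  rw [hσx, hτ] at h₁ h₂
  calc dist (φ x) (φ y) ≤ dist (φ x) (ψ (gapFill σ x y ∘ τ)) + dist (φ y) (ψ (gapFill σ x y ∘ τ)) :=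
        dist_triangle_right _ _ _
    _ ≤ 2 * S := by linarith

def spread (r t : ℕ) : ℕ := (2 * r + 2) * t + r

lemma strictMono_spread (r : ℕ) : StrictMono (spread r) := fun s t hst => by
  simpa [spread] using Nat.mul_lt_mul_of_pos_left hst (show 0 < 2 * r + 2 by omega)

/-- Two moves of `dist_le_two_mul_of_gap` connect interlacing tuples, passing through a copy of
`spread r ∘ a` shifted by `r + 1`; the dilation in `spread r` makes room for the values in
between. -/
lemma dist_spread_le_of_interLE (hσ : StrictMono σ) (hστ : ∀ i j, σ i ≠ τ j)
    (hS : ∀ w : Fin r → ℕ, StrictMono w → dist (φ (w ∘ σ)) (ψ (w ∘ τ)) ≤ S)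
    {a a' : Fin l → ℕ} (ha : StrictMono a) (ha' : StrictMono a') (h : InterLE a a') :
    dist (φ (spread r ∘ a)) (φ (spread r ∘ a')) ≤ 4 * S := by
  set B := 2 * r + 2
  change dist (φ fun i => B * a i + r) (φ fun i => B * a' i + r) ≤ 4 * S
  have hscale : ∀ s t, s < t → B * s + B ≤ B * t := fun s t hst => by
    simpa [mul_add] using Nat.mul_le_mul_left B hst
  have hmono : ∀ s t, s ≤ t → B * s ≤ B * t := fun s t hst => Nat.mul_le_mul_left B hst
  have hcross : ∀ i j, i < j → a' i ≤ a j := fun i j hij =>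
    (h.2 i.1 (by omega)).trans (ha.monotone (Fin.mk_le_of_le_val (by omega)))
  have h₁ := dist_le_two_mul_of_gap (φ := φ) hσ hστ hS (x := fun i => B * a i + r)
    (y := fun i => B * a i + r + (r + 1)) (fun i => by omega) (fun i => by omega)
    fun i j hij => by
      have := hscale _ _ (ha hij)
      omega
  have h₂ := dist_le_two_mul_of_gap (φ := φ) hσ hστ hS (x := fun i => B * a i + r + (r + 1))
    (y := fun i => B * a' i + r) (fun i => by omega) (fun i => by omega) fun i j hij => by
      have := hscale _ _ (ha hij)
      have := hscale _ _ ((h.1 i).trans_lt (ha' hij))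
      have := hscale _ _ (ha' hij)
      have := hmono _ _ (hcross i j hij)
      omega
  linarith [dist_triangle (φ fun i => B * a i + r) (φ fun i => B * a i + r + (r + 1))
    (φ fun i => B * a' i + r)]

lemma dist_spread_le_mul_dI (hσ : StrictMono σ) (hστ : ∀ i j, σ i ≠ τ j)
    (hS : ∀ w : Fin r → ℕ, StrictMono w → dist (φ (w ∘ σ)) (ψ (w ∘ τ)) ≤ S)
    (a a' : IncTuple l) :
    dist (φ (spread r ∘ a.1)) (φ (spread r ∘ a'.1)) ≤ 4 * S * dI a a' := by
  refine dist_le_mul_dI_of_adj (F := fun a : IncTuple l => φ (spread r ∘ a.1)) ?_ a a'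
  rintro a a' ⟨-, h | h⟩
  · exact dist_spread_le_of_interLE hσ hστ hS a.2 a'.2 h
  · exact dist_comm (φ _) _ ▸ dist_spread_le_of_interLE hσ hστ hS a'.2 a.2 h

end CutAndPaste

lemma bddAbove_permDistSet {M : Type*} [MetricSpace M] {l m : ℕ} {f : (Fin l → ℕ) → M}
    {g : (Fin m → ℕ) → M} (hf : IsBddMap f) (hg : IsBddMap g) (L : Set ℕ)
    (π : Equiv.Perm (Fin (l + m))) : BddAbove (permDistSet f g L π) := by
  obtain ⟨Rf, hRf⟩ := hf
  obtain ⟨Rg, hRg⟩ := hg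
  refine ⟨Rf + dist (f 0) (g 0) + Rg, ?_⟩
  rintro _ ⟨n, -, -, rfl⟩
  exact (dist_triangle4 _ (f 0) (g 0) _).trans
    (add_le_add (add_le_add (hRf _ _) le_rfl) (hRg _ _))

lemma HasPropQConst.exists_strictMono_dist_map_le {Y : Type*} [MetricSpace Y] {C K : ℝ}
    (hQ : HasPropQConst Y C) (hK : 0 ≤ K) {l m : ℕ} {F : IncTuple l → Y} {G : IncTuple m → Y}
    (hF : ∀ a a', dist (F a) (F a') ≤ K * dI a a') (hG : ∀ b b', dist (G b) (G b') ≤ K * dI b b') :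
    ∃ (u : ℕ → ℕ) (hu : StrictMono u),
      (∀ a a', dist (F (IncTuple.map u hu a)) (F (IncTuple.map u hu a')) ≤ C * K) ∧
      ∀ b b', dist (G (IncTuple.map u hu b)) (G (IncTuple.map u hu b')) ≤ C * K := by
  obtain ⟨M₁, hM₁, hFM₁⟩ := hQ l F K hK hF
  have he₁ := Nat.nth_strictMono hM₁
  obtain ⟨M₂, hM₂, hGM₂⟩ := hQ m (G ∘ IncTuple.map _ he₁) K hK fun b b' =>
    (hG _ _).trans (by gcongr; exact_mod_cast IncTuple.dI_map_le he₁ b b')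
  have he₂ := Nat.nth_strictMono hM₂
  exact ⟨_, he₁.comp he₂,
    fun a a' => hFM₁ _ _ (fun _ => Nat.nth_mem_of_infinite hM₁ _)
      fun _ => Nat.nth_mem_of_infinite hM₁ _,
    fun b b' => hGM₂ _ _ (IncTuple.memAll_map_nth hM₂ b) (IncTuple.memAll_map_nth hM₂ b')⟩

/-- After composing with `spread (l + m)`, both sides of a configuration are `4 S`-Lipschitz on
the interlacing graph, so they concentrate along a common subsequence `u`; the configuration
read off `u` then compares the two arrangements. -/
theorem upperStableWith_of_hasPropQConst {M : Type*} [MetricSpace M] {C : ℝ}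
    (hQ : HasPropQConst M C) : UpperStableWith M (8 * C + 1) := by
  intro l m f g hf hg L hL π hπ
  set S := sSup (permDistSet f g L π)
  set e := Nat.nth (· ∈ L)
  have he : StrictMono e := Nat.nth_strictMono hL
  have heL : ∀ t, e t ∈ L := Nat.nth_mem_of_infinite hL
  set σ : Fin l → Fin (l + m) := fun i => π (Fin.castAdd m i)
  set τ : Fin m → Fin (l + m) := fun j => π (Fin.natAdd l j)
  have hστ : ∀ i j, σ i ≠ τ j := fun i j h => by
    have := congrArg Fin.val (π.injective h)
    simp only [Fin.val_castAdd, Fin.val_natAdd] at this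
    omega
  have hS : ∀ w : Fin (l + m) → ℕ, StrictMono w →
      dist (f (e ∘ w ∘ σ)) (g (e ∘ w ∘ τ)) ≤ S := fun w hw =>
    le_csSup (bddAbove_permDistSet hf hg L π) ⟨e ∘ w, he.comp hw, fun _ => heL _, rfl⟩
  have hS' : ∀ w : Fin (l + m) → ℕ, StrictMono w →
      dist (g (e ∘ w ∘ τ)) (f (e ∘ w ∘ σ)) ≤ S := fun w hw => dist_comm (f _) (g _) ▸ hS w hw
  have hS₀ : 0 ≤ S := dist_nonneg.trans (hS _ Fin.val_strictMono)
  obtain ⟨u, hu, hFu, hGu⟩ := hQ.exists_strictMono_dist_map_le (by positivity : 0 ≤ 4 * S)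
    (F := fun a : IncTuple l => f (e ∘ spread (l + m) ∘ a.1))
    (G := fun b : IncTuple m => g (e ∘ spread (l + m) ∘ b.1))
    (dist_spread_le_mul_dI (φ := fun v => f (e ∘ v)) (ψ := fun v => g (e ∘ v)) hπ.1 hστ hS)
    (dist_spread_le_mul_dI (φ := fun v => g (e ∘ v)) (ψ := fun v => f (e ∘ v)) hπ.2
      (fun j i h => hστ i j h.symm) hS')
  set w : Fin (l + m) → ℕ := spread (l + m) ∘ u ∘ Fin.val
  have hw : StrictMono w := (strictMono_spread _).comp (hu.comp Fin.val_strictMono)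
  have hInf : sInf (permDistSet f g L (Equiv.refl _)) ≤
      dist (f (e ∘ w ∘ Fin.castAdd m)) (g (e ∘ w ∘ Fin.natAdd l)) :=
    csInf_le ⟨0, by rintro _ ⟨_, -, -, rfl⟩; exact dist_nonneg⟩
      ⟨e ∘ w, he.comp hw, fun _ => heL _, rfl⟩
  calc sInf (permDistSet f g L (Equiv.refl _))
      ≤ dist (f (e ∘ w ∘ Fin.castAdd m)) (f (e ∘ w ∘ σ)) + dist (f (e ∘ w ∘ σ)) (g (e ∘ w ∘ τ))
        + dist (g (e ∘ w ∘ τ)) (g (e ∘ w ∘ Fin.natAdd l)) :=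
      hInf.trans (dist_triangle4 _ _ _ _)
    _ ≤ C * (4 * S) + S + C * (4 * S) :=
      add_le_add (add_le_add
        (hFu ⟨_, Fin.val_strictMono.comp (Fin.strictMono_castAdd m)⟩
          ⟨_, Fin.val_strictMono.comp hπ.1⟩) (hS w hw))
        (hGu ⟨_, Fin.val_strictMono.comp hπ.2⟩
          ⟨_, Fin.val_strictMono.comp (Fin.strictMono_natAdd l)⟩)
    _ = (8 * C + 1) * S := by ring

theorem stmt18_general (X : Type*) [NormedAddCommGroup X] [NormedSpace ℝ X] :
    (∀ (N : Type) [MetricSpace N], HasPropQ N →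
      ((∃ h : X → N, CoarseEmbMod h) ∨
        (∃ h : Metric.closedBall (0 : X) 1 → N, UniformEmbMod h)) →
      HasPropQ X) ∧
    (∀ (N : Type) [MetricSpace N], (∃ C : ℝ, 0 ≤ C ∧ UpperStableWith N C) →
      ((∃ h : X → N, CoarseEmbMod h) ∨
        (∃ h : Metric.closedBall (0 : X) 1 → N, UniformEmbMod h)) →
      ∃ C : ℝ, 0 ≤ C ∧ UpperStableWith X C) := by
  refine ⟨fun N _ hN hemb => hasPropQ_of_embedding hN hemb, fun N _ ⟨C, hC, hUS⟩ hemb => ?_⟩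
  have hN : HasPropQ N := ⟨_, by positivity, hasPropQConst_of_upperStableWith hC hUS⟩
  obtain ⟨C', hC', hX⟩ := hasPropQ_of_embedding hN hemb
  exact ⟨_, by positivity, upperStableWith_of_hasPropQConst hX⟩

/-- If a Banach space `X` embeds coarsely, or its unit ball uniformly, into a metric space
with property `Q` (equivalently, an upper stable metric space), then `X` has property `Q`
(equivalently, is upper stable). -/
theorem stmt18 (X : Type*) [NormedAddCommGroup X] [NormedSpace ℝ X] [CompleteSpace X] :
    (∀ (N : Type) [MetricSpace N], HasPropQ N →
      ((∃ h : X → N, CoarseEmbMod h) ∨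
        (∃ h : Metric.closedBall (0 : X) 1 → N, UniformEmbMod h)) →
      HasPropQ X) ∧
    (∀ (N : Type) [MetricSpace N], (∃ C : ℝ, 0 ≤ C ∧ UpperStableWith N C) →
      ((∃ h : X → N, CoarseEmbMod h) ∨
        (∃ h : Metric.closedBall (0 : X) 1 → N, UniformEmbMod h)) →
      ∃ C : ℝ, 0 ≤ C ∧ UpperStableWith X C) :=
  stmt18_general X
end
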